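/- arXiv:math/0508411 — 8 statements merged into one kernel-verified Lean document; each statement's English description precedes it below -/
import Mathlib

section
/- In the K-algebra A^e ⋈ H, the map s_L : A → A^e ⋈ H, s_L(a) = a ⊗ 1̄ ⋈ 1, is a K-algebra homomorphism; the map t_L : A → A^e ⋈ H, t_L(a) = 1 ⊗ ā ⋈ 1, is a K-algebra anti-homomorphism (t_L(a)t_L(b) = t_L(ba), t_L(1) = 1); and their images commute: t_L(x) s_L(y) = s_L(y) t_L(x) for all x, y ∈ A. -/
open TensorProduct MulOpposite

/-- A trivial representation of the comultiplication of `1` in a Hopf algebra. -/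
def repr1 (K H : Type*) [CommRing K] [Ring H] [HopfAlgebra K H] :
    Coalgebra.Repr K (1 : H) PUnit where
  index := {PUnit.unit}
  left := fun _ => 1
  right := fun _ => 1
  eq := by simp [Algebra.TensorProduct.one_def]

lemma antipode_one' (K H : Type*) [CommRing K] [Ring H] [HopfAlgebra K H] :
    HopfAlgebra.antipode (R := K) (1 : H) = 1 := by
  have h := HopfAlgebra.sum_mul_antipode_eq_algebraMap_counit (R := K) (repr1.{_,_,0} K H)
  simpa [repr1] using h

/-- In the `K`-algebra `A^e ⋈ H` (the `K`-module `A ⊗[K] Aᵐᵒᵖ ⊗[K] H` with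
multiplication determined by `(a ⊗ b̄ ⋈ h)(c ⊗ d̄ ⋈ k) = Σ a (h₍₁₎ • c) ⊗ (d (S k₍₂₎ • b))‾ ⋈
h₍₂₎ k₍₁₎` and unit `1 ⊗ 1̄ ⋈ 1`), the `K`-linear map `s_L(a) = a ⊗ 1̄ ⋈ 1` is an algebra
homomorphism, the `K`-linear map `t_L(a) = 1 ⊗ ā ⋈ 1` is an algebra anti-homomorphism, and
their images commute: `t_L(x) s_L(y) = s_L(y) t_L(x)`. -/
theorem stmt2 (K H A : Type*) [CommRing K] [Ring H] [HopfAlgebra K H]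
    [Ring A] [Algebra K A] [Module H A] [IsScalarTower K H A] [SMulCommClass K H A]
    (hact_mul : ∀ (h : H) (a b : A) {ι : Type*} (ℋ : Coalgebra.Repr K h ι),
      h • (a * b) = ∑ i ∈ ℋ.index, (ℋ.left i • a) * (ℋ.right i • b))
    (hact_one : ∀ h : H, h • (1 : A) = algebraMap K A (Coalgebra.counit (R := K) h))
    (mul : (A ⊗[K] (Aᵐᵒᵖ ⊗[K] H)) →ₗ[K] (A ⊗[K] (Aᵐᵒᵖ ⊗[K] H)) →ₗ[K] (A ⊗[K] (Aᵐᵒᵖ ⊗[K] H)))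
    (hmul : ∀ (a b c d : A) (h k : H) {ι : Type*} (ℋ : Coalgebra.Repr K h ι) {κ : Type*} (𝒦 : Coalgebra.Repr K k κ),
        mul (a ⊗ₜ (op b ⊗ₜ h)) (c ⊗ₜ (op d ⊗ₜ k)) =
          ∑ i ∈ ℋ.index, ∑ j ∈ 𝒦.index,
            (a * (ℋ.left i • c)) ⊗ₜ
              (op (d * (HopfAlgebra.antipode (R := K) (𝒦.right j) • b)) ⊗ₜ
                (ℋ.right i * 𝒦.left j)))
    (sL : A →ₗ[K] (A ⊗[K] (Aᵐᵒᵖ ⊗[K] H)))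
    (hsL : ∀ a : A, sL a = a ⊗ₜ (op (1:A) ⊗ₜ (1:H)))
    (tL : A →ₗ[K] (A ⊗[K] (Aᵐᵒᵖ ⊗[K] H)))
    (htL : ∀ a : A, tL a = (1:A) ⊗ₜ (op a ⊗ₜ (1:H))) :
    (∀ a b : A, mul (sL a) (sL b) = sL (a * b)) ∧
    sL 1 = (1:A) ⊗ₜ (op (1:A) ⊗ₜ (1:H)) ∧
    (∀ a b : A, mul (tL a) (tL b) = tL (b * a)) ∧
    tL 1 = (1:A) ⊗ₜ (op (1:A) ⊗ₜ (1:H)) ∧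
    (∀ x y : A, mul (tL x) (sL y) = mul (sL y) (tL x)) := by
  refine ⟨fun a b => ?_, by rw [hsL], fun a b => ?_, by rw [htL], fun x y => ?_⟩
  · rw [hsL a, hsL b, hsL (a * b), hmul a 1 b 1 1 1 (repr1 K H) (repr1 K H)]
    simp [repr1, antipode_one' K H]
  · rw [htL a, htL b, htL (b * a), hmul 1 a 1 b 1 1 (repr1 K H) (repr1 K H)]
    simp [repr1, antipode_one' K H]
  · rw [htL x, hsL y, hmul 1 x y 1 1 1 (repr1 K H) (repr1 K H),
      hmul y 1 1 x 1 1 (repr1 K H) (repr1 K H)]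
    simp [repr1, antipode_one' K H]
end

section
/- Define the K-linear map ε : A^e ⋈ H → A on pure tensors by ε(a ⊗ b̄ ⋈ h) = a (h • b). Then ε(1 ⊗ 1̄ ⋈ 1) = 1; for all ξ, η ∈ A^e ⋈ H one has ε(ξη) = ε(ξ · s_L(ε(η))) = ε(ξ · t_L(ε(η))); and for all x, y ∈ A and ξ ∈ A^e ⋈ H one has ε(s_L(x) t_L(y) ξ) = x ε(ξ) y. -/
open TensorProduct MulOpposite


section stmt3aux
set_option linter.unusedSectionVars false

universe v

noncomputable def stmt3Reindex {K H : Type*} [CommRing K] [AddCommGroup H] [Module K H]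
    [CoalgebraStruct K H] {a : H} {ι : Type*} (r : Coalgebra.Repr K a ι) :
    Coalgebra.Repr K a (ULift.{v} (Fin r.index.card)) where
  index := Finset.univ
  left i := r.left (r.index.equivFin.symm i.down)
  right i := r.right (r.index.equivFin.symm i.down)
  eq := by
    rw [← r.eq, ← Finset.sum_coe_sort r.index (fun i => r.left i ⊗ₜ[K] r.right i)]
    exact Fintype.sum_equiv (Equiv.ulift.trans r.index.equivFin.symm)
      _ (fun x => r.left x.1 ⊗ₜ[K] r.right x.1) (fun _ => rfl)

variable {K H A : Type*} [CommRing K] [Ring H] [HopfAlgebra K H]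
  [Ring A] [Algebra K A] [Module H A] [IsScalarTower K H A] [SMulCommClass K H A]

/-- an arbitrary representation, reindexed to live in any given universe -/
noncomputable def stmt3R (x : H) :
    Coalgebra.Repr K x (ULift.{v} (Fin (Coalgebra.Repr.arbitrary K x).index.card)) :=
  stmt3Reindex.{v} (Coalgebra.Repr.arbitrary K x)

/-- trivial representation of `1 : H`, in any universe -/
noncomputable def stmt3OneRepr : Coalgebra.Repr K (1 : H) (ULift.{v} ℕ) where
  index := ({ULift.up 0} : Finset (ULift.{v} ℕ))
  left _ := 1
  right _ := 1
  eq := by simp [Algebra.TensorProduct.one_def]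

lemma stmt3_antipode_one : HopfAlgebra.antipode (R := K) (1 : H) = 1 := by
  have := HopfAlgebra.sum_mul_antipode_eq_algebraMap_counit (R := K) (stmt3OneRepr.{0} (K := K) (H := H))
  simpa [stmt3OneRepr] using this

lemma stmt3_algebraMap_smul (r : K) (b : A) : (algebraMap K H r) • b = r • b := by
  rw [Algebra.algebraMap_eq_smul_one, smul_assoc, one_smul]

lemma stmt3_sum_counit_smul {k : H} {κ : Type*} (𝒦 : Coalgebra.Repr K k κ) :
    ∑ j ∈ 𝒦.index, Coalgebra.counit (R := K) (𝒦.right j) • 𝒦.left j = k := by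
  have h1 : (TensorProduct.rid K H) (∑ j ∈ 𝒦.index, 𝒦.left j ⊗ₜ Coalgebra.counit (R := K) (𝒦.right j)) = ∑ j ∈ 𝒦.index, Coalgebra.counit (R := K) (𝒦.right j) • 𝒦.left j := by
    rw [map_sum]; simp only [TensorProduct.rid_tmul]
  rw [← h1, Coalgebra.sum_tmul_counit_eq, TensorProduct.rid_tmul, one_smul]

/-- `x ⊗ (y ⊗ z) ↦ (x • d) * ((y * S z) • b)`. -/
noncomputable def stmt3F (b d : A) : H ⊗[K] (H ⊗[K] H) →ₗ[K] A :=
  TensorProduct.lift (LinearMap.mk₂ K (fun (x : H) (w : A) => (x • d) * w)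
    (by intros; simp [add_smul, add_mul])
    (by intros; simp [smul_assoc, smul_mul_assoc])
    (by intros; simp [mul_add])
    (by intros; simp [mul_smul_comm])) ∘ₗ
  LinearMap.lTensor H (TensorProduct.lift (LinearMap.mk₂ K
    (fun (y z : H) => (y * HopfAlgebra.antipode (R := K) z) • b)
    (by intros; simp [add_mul, add_smul])
    (by intros; simp [smul_mul_assoc, smul_assoc])
    (by intros; simp [mul_add, add_smul])
    (by intros; simp [mul_smul_comm, smul_assoc])))

@[simp] lemma stmt3F_apply (b d : A) (x y z : H) :
    stmt3F (K := K) b d (x ⊗ₜ (y ⊗ₜ z)) =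
      (x • d) * ((y * HopfAlgebra.antipode (R := K) z) • b) := by
  simp [stmt3F]

lemma stmt3_stepB
    (hact_mul : ∀ (h : H) (a b : A) (ι : Type v) (ℋ : Coalgebra.Repr K h ι),
      h • (a * b) = ∑ i ∈ ℋ.index, (ℋ.left i • a) * (ℋ.right i • b))
    {κ : Type*} (b d : A) (k : H) (𝒦 : Coalgebra.Repr K k κ) :
    ∑ j ∈ 𝒦.index, 𝒦.left j • (d * (HopfAlgebra.antipode (R := K) (𝒦.right j) • b))
      = (k • d) * b := by
  classical
  have step1 : ∀ j ∈ 𝒦.index,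
      𝒦.left j • (d * (HopfAlgebra.antipode (R := K) (𝒦.right j) • b))
        = stmt3F (K := K) b d (∑ m ∈ (stmt3R.{v} (K := K) (𝒦.left j)).index,
            (stmt3R.{v} (K := K) (𝒦.left j)).left m ⊗ₜ
              ((stmt3R.{v} (K := K) (𝒦.left j)).right m ⊗ₜ 𝒦.right j)) := by
    intro j _
    rw [hact_mul _ _ _ _ (stmt3R.{v} (K := K) (𝒦.left j)), map_sum]
    refine Finset.sum_congr rfl fun m _ => ?_
    rw [stmt3F_apply, mul_smul]
  rw [Finset.sum_congr rfl step1, ← map_sum]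
  have key : (∑ j ∈ 𝒦.index, ∑ m ∈ (stmt3R.{v} (K := K) (𝒦.left j)).index,
      (stmt3R.{v} (K := K) (𝒦.left j)).left m ⊗ₜ
        ((stmt3R.{v} (K := K) (𝒦.left j)).right m ⊗ₜ[K] 𝒦.right j))
      = ∑ j ∈ 𝒦.index, ∑ m ∈ (stmt3R.{v} (K := K) (𝒦.right j)).index,
          𝒦.left j ⊗ₜ ((stmt3R.{v} (K := K) (𝒦.right j)).left m ⊗ₜ[K]
            (stmt3R.{v} (K := K) (𝒦.right j)).right m) :=
    Coalgebra.sum_tmul_tmul_eq 𝒦 _ _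
  rw [key, map_sum]
  have step2 : ∀ j ∈ 𝒦.index,
      stmt3F (K := K) b d (∑ m ∈ (stmt3R.{v} (K := K) (𝒦.right j)).index,
        𝒦.left j ⊗ₜ ((stmt3R.{v} (K := K) (𝒦.right j)).left m ⊗ₜ[K]
          (stmt3R.{v} (K := K) (𝒦.right j)).right m))
      = ((Coalgebra.counit (R := K) (𝒦.right j) • 𝒦.left j) • d) * b := by
    intro j _
    rw [map_sum]
    simp only [stmt3F_apply]
    rw [← Finset.mul_sum, ← Finset.sum_smul,
      HopfAlgebra.sum_mul_antipode_eq_algebraMap_counit, stmt3_algebraMap_smul, mul_smul_comm,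
      ← smul_mul_assoc, ← smul_assoc]
  rw [Finset.sum_congr rfl step2, ← Finset.sum_mul, ← Finset.sum_smul,
    stmt3_sum_counit_smul]

end stmt3aux

section stmt3aux2
set_option linter.unusedSectionVars false
universe v v₁ v₂
variable {K H A : Type*} [CommRing K] [Ring H] [HopfAlgebra K H]
  [Ring A] [Algebra K A] [Module H A] [IsScalarTower K H A] [SMulCommClass K H A]

/-- `x ⊗ y ↦ (x • u) * (y • w)`. -/
noncomputable def stmt3G (u w : A) : H ⊗[K] H →ₗ[K] A :=
  TensorProduct.lift (LinearMap.mk₂ K (fun (x y : H) => (x • u) * (y • w))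
    (by intros; simp [add_smul, add_mul])
    (by intros; simp [smul_assoc, smul_mul_assoc])
    (by intros; simp [add_smul, mul_add])
    (by intros; simp [smul_assoc, mul_smul_comm]))

@[simp] lemma stmt3G_apply (u w : A) (x y : H) :
    stmt3G (K := K) u w (x ⊗ₜ y) = (x • u) * (y • w) := by
  simp [stmt3G]

lemma stmt3_hact_any
    (hact_mul : ∀ (h : H) (a b : A) (ι : Type v) (ℋ : Coalgebra.Repr K h ι),
      h • (a * b) = ∑ i ∈ ℋ.index, (ℋ.left i • a) * (ℋ.right i • b))
    (h : H) (u w : A) {ι₁ : Type v₁} (r : Coalgebra.Repr K h ι₁) :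
    ∑ i ∈ r.index, (r.left i • u) * (r.right i • w) = h • (u * w) := by
  have e : (∑ i ∈ r.index, r.left i ⊗ₜ[K] r.right i)
      = ∑ i ∈ (stmt3R.{v} (K := K) h).index,
          (stmt3R.{v} (K := K) h).left i ⊗ₜ[K] (stmt3R.{v} (K := K) h).right i :=
    r.eq.trans (stmt3R.{v} (K := K) h).eq.symm
  have e2 := congrArg (stmt3G (K := K) u w) e
  simp only [map_sum, stmt3G_apply] at e2
  rw [e2, ← hact_mul h u w _ (stmt3R.{v} (K := K) h)]

open HopfAlgebra in
lemma stmt3_crux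
    (hact_mul : ∀ (h : H) (a b : A) (ι : Type v) (ℋ : Coalgebra.Repr K h ι),
      h • (a * b) = ∑ i ∈ ℋ.index, (ℋ.left i • a) * (ℋ.right i • b))
    (mul : (A ⊗[K] (Aᵐᵒᵖ ⊗[K] H)) →ₗ[K] (A ⊗[K] (Aᵐᵒᵖ ⊗[K] H)) →ₗ[K] (A ⊗[K] (Aᵐᵒᵖ ⊗[K] H)))
    (hmul : ∀ (a b c d : A) (h k : H) (ι : Type v₁) (ℋ : Coalgebra.Repr K h ι)
        (κ : Type v₂) (𝒦 : Coalgebra.Repr K k κ),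
        mul (a ⊗ₜ (op b ⊗ₜ h)) (c ⊗ₜ (op d ⊗ₜ k)) =
          ∑ i ∈ ℋ.index, ∑ j ∈ 𝒦.index,
            (a * (ℋ.left i • c)) ⊗ₜ
              (op (d * (HopfAlgebra.antipode (R := K) (𝒦.right j) • b)) ⊗ₜ
                (ℋ.right i * 𝒦.left j)))
    (ε : (A ⊗[K] (Aᵐᵒᵖ ⊗[K] H)) →ₗ[K] A)
    (hε : ∀ (a b : A) (h : H), ε (a ⊗ₜ (op b ⊗ₜ h)) = a * (h • b))
    (a b c d : A) (h k : H) :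
    ε (mul (a ⊗ₜ (op b ⊗ₜ h)) (c ⊗ₜ (op d ⊗ₜ k))) = a * (h • (c * (k • d) * b)) := by
  classical
  set ℋ := stmt3R.{v₁} (K := K) h with hℋ
  set 𝒦 := stmt3R.{v₂} (K := K) k with h𝒦
  rw [hmul a b c d h k _ ℋ _ 𝒦, map_sum]
  simp only [map_sum, hε]
  have inner : ∀ i ∈ ℋ.index,
      (∑ j ∈ 𝒦.index, (a * (ℋ.left i • c)) *
        ((ℋ.right i * 𝒦.left j) • (d * (HopfAlgebra.antipode (R := K) (𝒦.right j) • b))))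
      = (a * (ℋ.left i • c)) * (ℋ.right i • ((k • d) * b)) := by
    intro i _
    simp only [mul_smul]
    rw [← Finset.mul_sum, ← Finset.smul_sum,
      stmt3_stepB hact_mul b d k 𝒦]
  rw [Finset.sum_congr rfl inner]
  simp only [mul_assoc]
  rw [← Finset.mul_sum, stmt3_hact_any hact_mul h c ((k • d) * b) ℋ]

end stmt3aux2

/-- In the `K`-algebra `A^e ⋈ H` (the `K`-module `A ⊗[K] Aᵐᵒᵖ ⊗[K] H` with
multiplication determined by `(a ⊗ b̄ ⋈ h)(c ⊗ d̄ ⋈ k) = Σ a (h₍₁₎ • c) ⊗ (d (S k₍₂₎ • b))‾ ⋈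
h₍₂₎ k₍₁₎` and unit `1 ⊗ 1̄ ⋈ 1`), the `K`-linear counit `ε` determined on pure tensors by
`ε(a ⊗ b̄ ⋈ h) = a (h • b)` satisfies `ε(1) = 1`,
`ε(ξη) = ε(ξ · s_L(ε(η))) = ε(ξ · t_L(ε(η)))` where `s_L(a) = a ⊗ 1̄ ⋈ 1` and
`t_L(a) = 1 ⊗ ā ⋈ 1`, and `ε(s_L(x) t_L(y) ξ) = x ε(ξ) y`. -/
theorem stmt3 (K H A : Type*) [CommRing K] [Ring H] [HopfAlgebra K H]
    [Ring A] [Algebra K A] [Module H A] [IsScalarTower K H A] [SMulCommClass K H A]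
    (hact_mul : ∀ (h : H) (a b : A) (ι : Type*) (ℋ : Coalgebra.Repr K h ι),
      h • (a * b) = ∑ i ∈ ℋ.index, (ℋ.left i • a) * (ℋ.right i • b))
    (hact_one : ∀ h : H, h • (1 : A) = algebraMap K A (Coalgebra.counit (R := K) h))
    (mul : (A ⊗[K] (Aᵐᵒᵖ ⊗[K] H)) →ₗ[K] (A ⊗[K] (Aᵐᵒᵖ ⊗[K] H)) →ₗ[K] (A ⊗[K] (Aᵐᵒᵖ ⊗[K] H)))
    (hmul : ∀ (a b c d : A) (h k : H) (ι : Type*) (ℋ : Coalgebra.Repr K h ι) (κ : Type*)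
        (𝒦 : Coalgebra.Repr K k κ),
        mul (a ⊗ₜ (op b ⊗ₜ h)) (c ⊗ₜ (op d ⊗ₜ k)) =
          ∑ i ∈ ℋ.index, ∑ j ∈ 𝒦.index,
            (a * (ℋ.left i • c)) ⊗ₜ
              (op (d * (HopfAlgebra.antipode (R := K) (𝒦.right j) • b)) ⊗ₜ
                (ℋ.right i * 𝒦.left j)))
    (hassoc : ∀ x y z, mul (mul x y) z = mul x (mul y z))
    (hone : ∀ x, mul ((1:A) ⊗ₜ (op (1:A) ⊗ₜ (1:H))) x = x ∧
        mul x ((1:A) ⊗ₜ (op (1:A) ⊗ₜ (1:H))) = x)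
    (ε : (A ⊗[K] (Aᵐᵒᵖ ⊗[K] H)) →ₗ[K] A)
    (hε : ∀ (a b : A) (h : H), ε (a ⊗ₜ (op b ⊗ₜ h)) = a * (h • b)) :
    ε ((1:A) ⊗ₜ (op (1:A) ⊗ₜ (1:H))) = 1 ∧
    (∀ ξ η, ε (mul ξ η) = ε (mul ξ (ε η ⊗ₜ (op (1:A) ⊗ₜ (1:H))))) ∧
    (∀ ξ η, ε (mul ξ η) = ε (mul ξ ((1:A) ⊗ₜ (op (ε η) ⊗ₜ (1:H))))) ∧
    (∀ (x y : A) (ξ : A ⊗[K] (Aᵐᵒᵖ ⊗[K] H)),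
        ε (mul (mul (x ⊗ₜ (op (1:A) ⊗ₜ (1:H))) ((1:A) ⊗ₜ (op y ⊗ₜ (1:H)))) ξ) =
          x * ε ξ * y) := by
  classical
  have crux := stmt3_crux (K := K) (H := H) (A := A) hact_mul mul hmul ε hε
  refine ⟨?_, ?_, ?_, ?_⟩
  · rw [hε, one_smul, mul_one]
  · intro ξ η
    induction η using TensorProduct.induction_on with
    | zero => simp only [LinearMap.map_zero, TensorProduct.zero_tmul,
            TensorProduct.tmul_zero, LinearMap.zero_apply, mul_zero, zero_mul, op_zero]
    | add y z ihy ihz =>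
        simp only [LinearMap.map_add, TensorProduct.add_tmul]
        rw [ihy, ihz]
    | tmul c t =>
      induction t using TensorProduct.induction_on with
      | zero => simp only [LinearMap.map_zero, TensorProduct.zero_tmul,
            TensorProduct.tmul_zero, LinearMap.zero_apply, mul_zero, zero_mul, op_zero]
      | add s t ihs iht =>
          simp only [TensorProduct.tmul_add, LinearMap.map_add, TensorProduct.add_tmul]
          rw [ihs, iht]
      | tmul m k =>
        induction m using MulOpposite.rec' with
        | h d =>
          induction ξ using TensorProduct.induction_on with
          | zero => simp only [LinearMap.map_zero, TensorProduct.zero_tmul,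
            TensorProduct.tmul_zero, LinearMap.zero_apply, mul_zero, zero_mul, op_zero]
          | add u v ihu ihv =>
              simp only [LinearMap.map_add, LinearMap.add_apply]
              rw [ihu, ihv]
          | tmul a t' =>
            induction t' using TensorProduct.induction_on with
            | zero => simp only [LinearMap.map_zero, TensorProduct.zero_tmul,
            TensorProduct.tmul_zero, LinearMap.zero_apply, mul_zero, zero_mul, op_zero]
            | add s' t' ihs' iht' =>
                simp only [TensorProduct.tmul_add, LinearMap.map_add, LinearMap.add_apply]
                rw [ihs', iht']
            | tmul m' h =>
              induction m' using MulOpposite.rec' with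
              | h b =>
                rw [crux, hε, crux, one_smul, mul_one]
  · intro ξ η
    induction η using TensorProduct.induction_on with
    | zero => simp only [LinearMap.map_zero, TensorProduct.zero_tmul,
            TensorProduct.tmul_zero, LinearMap.zero_apply, mul_zero, zero_mul, op_zero]
    | add y z ihy ihz =>
        simp only [LinearMap.map_add, TensorProduct.tmul_add, TensorProduct.add_tmul, op_add]
        rw [ihy, ihz]
    | tmul c t =>
      induction t using TensorProduct.induction_on with
      | zero => simp only [LinearMap.map_zero, TensorProduct.zero_tmul,
            TensorProduct.tmul_zero, LinearMap.zero_apply, mul_zero, zero_mul, op_zero]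
      | add s t ihs iht =>
          simp only [TensorProduct.tmul_add, LinearMap.map_add, TensorProduct.add_tmul, op_add]
          rw [ihs, iht]
      | tmul m k =>
        induction m using MulOpposite.rec' with
        | h d =>
          induction ξ using TensorProduct.induction_on with
          | zero => simp only [LinearMap.map_zero, TensorProduct.zero_tmul,
            TensorProduct.tmul_zero, LinearMap.zero_apply, mul_zero, zero_mul, op_zero]
          | add u v ihu ihv =>
              simp only [LinearMap.map_add, LinearMap.add_apply]
              rw [ihu, ihv]
          | tmul a t' =>
            induction t' using TensorProduct.induction_on with
            | zero => simp only [LinearMap.map_zero, TensorProduct.zero_tmul,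
            TensorProduct.tmul_zero, LinearMap.zero_apply, mul_zero, zero_mul, op_zero]
            | add s' t' ihs' iht' =>
                simp only [TensorProduct.tmul_add, LinearMap.map_add, LinearMap.add_apply]
                rw [ihs', iht']
            | tmul m' h =>
              induction m' using MulOpposite.rec' with
              | h b =>
                rw [crux, hε, crux, one_smul, one_mul]
  · intro x y ξ
    have hxy : mul (x ⊗ₜ (op (1:A) ⊗ₜ (1:H))) ((1:A) ⊗ₜ (op y ⊗ₜ (1:H)))
        = x ⊗ₜ (op y ⊗ₜ (1:H)) := by
      rw [hmul x 1 1 y 1 1 _ stmt3OneRepr _ stmt3OneRepr]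
      simp [stmt3OneRepr, stmt3_antipode_one]
    rw [hxy]
    induction ξ using TensorProduct.induction_on with
    | zero => simp only [LinearMap.map_zero, TensorProduct.zero_tmul,
            TensorProduct.tmul_zero, LinearMap.zero_apply, mul_zero, zero_mul, op_zero]
    | add u v ihu ihv =>
        simp only [LinearMap.map_add, mul_add, add_mul]
        rw [ihu, ihv]
    | tmul c t =>
      induction t using TensorProduct.induction_on with
      | zero => simp only [LinearMap.map_zero, TensorProduct.zero_tmul,
            TensorProduct.tmul_zero, LinearMap.zero_apply, mul_zero, zero_mul, op_zero]
      | add s t ihs iht =>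
          simp only [TensorProduct.tmul_add, LinearMap.map_add, mul_add, add_mul]
          rw [ihs, iht]
      | tmul m k =>
        induction m using MulOpposite.rec' with
        | h d =>
          rw [crux, hε, one_smul]
          simp only [mul_assoc]
end

section
/- Assume the antipode of H is involutive, S ∘ S = id_H. Then the K-linear map τ : A^e ⋈ H → A^e ⋈ H determined by τ(a ⊗ b̄ ⋈ h) = b ⊗ ā ⋈ S(h) is an anti-automorphism of the K-algebra A^e ⋈ H (it is bijective, τ(1) = 1, and τ(ξη) = τ(η)τ(ξ) for all ξ, η); moreover τ ∘ τ = id and τ(t_L(a)) = s_L(a) for all a ∈ A. -/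
open TensorProduct MulOpposite

open TensorProduct

namespace Stmt4Aux

variable {K H B : Type*} [CommRing K] [Ring H] [HopfAlgebra K H]
  [AddCommGroup B] [Module K B]

local notation "ε" => Coalgebra.counit (R := K) (A := H)
local notation "𝒮" => HopfAlgebra.antipode (R := K) (A := H)

noncomputable def conv (μ : B →ₗ[K] B →ₗ[K] B) (f g : H →ₗ[K] B) : H →ₗ[K] B :=
  TensorProduct.lift μ ∘ₗ TensorProduct.map f g ∘ₗ Coalgebra.comul

noncomputable def oneC (e : B) : H →ₗ[K] B :=
  LinearMap.toSpanSingleton K B e ∘ₗ Coalgebra.counit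

lemma oneC_apply (e : B) (h : H) : oneC (K := K) e h = ε h • e := rfl

lemma conv_apply_repr (μ : B →ₗ[K] B →ₗ[K] B) (f g : H →ₗ[K] B) {h : H}
    {ι : Type*} (ℛ : Coalgebra.Repr K h ι) :
    conv μ f g h = ∑ i ∈ ℛ.index, μ (f (ℛ.left i)) (g (ℛ.right i)) := by
  simp only [conv, LinearMap.comp_apply, ← ℛ.eq, map_sum, TensorProduct.map_tmul,
    TensorProduct.lift.tmul]

lemma counit_smul_sum_right {h : H} {ι : Type*} (ℛ : Coalgebra.Repr K h ι) :
    ∑ i ∈ ℛ.index, ε (ℛ.right i) • ℛ.left i = h := by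
  have := congrArg (TensorProduct.rid K H) (Coalgebra.sum_tmul_counit_eq (R := K) ℛ)
  rw [map_sum] at this
  simp only [TensorProduct.rid_tmul, one_smul] at this
  exact this

lemma counit_smul_sum_left {h : H} {ι : Type*} (ℛ : Coalgebra.Repr K h ι) :
    ∑ i ∈ ℛ.index, ε (ℛ.left i) • ℛ.right i = h := by
  have := congrArg (TensorProduct.lid K H) (Coalgebra.sum_counit_tmul_eq (R := K) ℛ)
  rw [map_sum] at this
  simp only [TensorProduct.lid_tmul, one_smul] at this
  exact this

lemma conv_one (μ : B →ₗ[K] B →ₗ[K] B) (e : B) (he : ∀ b, μ b e = b) (f : H →ₗ[K] B) :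
    conv μ f (oneC e) = f := by
  ext h
  rw [conv_apply_repr μ f _ (Coalgebra.Repr.arbitrary K h)]
  simp only [oneC_apply, map_smul, he]
  calc ∑ i ∈ (Coalgebra.Repr.arbitrary K h).index,
        ε ((Coalgebra.Repr.arbitrary K h).right i) • f ((Coalgebra.Repr.arbitrary K h).left i)
      = f (∑ i ∈ (Coalgebra.Repr.arbitrary K h).index,
          ε ((Coalgebra.Repr.arbitrary K h).right i) • (Coalgebra.Repr.arbitrary K h).left i) := by
        rw [map_sum]; simp only [map_smul]
    _ = f h := by rw [counit_smul_sum_right]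

lemma one_conv (μ : B →ₗ[K] B →ₗ[K] B) (e : B) (he : ∀ b, μ e b = b) (f : H →ₗ[K] B) :
    conv μ (oneC e) f = f := by
  ext h
  rw [conv_apply_repr μ _ f (Coalgebra.Repr.arbitrary K h)]
  simp only [oneC_apply, map_smul, LinearMap.smul_apply, he]
  calc ∑ i ∈ (Coalgebra.Repr.arbitrary K h).index,
        ε ((Coalgebra.Repr.arbitrary K h).left i) • f ((Coalgebra.Repr.arbitrary K h).right i)
      = f (∑ i ∈ (Coalgebra.Repr.arbitrary K h).index,
          ε ((Coalgebra.Repr.arbitrary K h).left i) • (Coalgebra.Repr.arbitrary K h).right i) := by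
        rw [map_sum]; simp only [map_smul]
    _ = f h := by rw [counit_smul_sum_left]

lemma conv_assoc (μ : B →ₗ[K] B →ₗ[K] B) (hμ : ∀ a b c, μ (μ a b) c = μ a (μ b c))
    (f g w : H →ₗ[K] B) :
    conv μ (conv μ f g) w = conv μ f (conv μ g w) := by
  have K1 : TensorProduct.lift μ ∘ₗ (TensorProduct.lift μ).rTensor B =
      TensorProduct.lift μ ∘ₗ (TensorProduct.lift μ).lTensor B ∘ₗ
        (TensorProduct.assoc K B B B).toLinearMap := by
    apply TensorProduct.ext_threefold
    intro a b c
    simp [hμ]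
  have K2 : (TensorProduct.assoc K B B B).toLinearMap ∘ₗ
        TensorProduct.map (TensorProduct.map f g) w =
      TensorProduct.map f (TensorProduct.map g w) ∘ₗ
        (TensorProduct.assoc K H H H).toLinearMap := by
    apply TensorProduct.ext_threefold
    intro a b c
    simp
  have e1 : TensorProduct.map (TensorProduct.lift μ ∘ₗ TensorProduct.map f g ∘ₗ Coalgebra.comul) w =
      ((TensorProduct.lift μ).rTensor B) ∘ₗ (TensorProduct.map (TensorProduct.map f g) w) ∘ₗ
        ((Coalgebra.comul (R := K) (A := H)).rTensor H) := by
    apply TensorProduct.ext'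
    intro x y
    simp
  have e2 : TensorProduct.map f (TensorProduct.lift μ ∘ₗ TensorProduct.map g w ∘ₗ Coalgebra.comul) =
      ((TensorProduct.lift μ).lTensor B) ∘ₗ (TensorProduct.map f (TensorProduct.map g w)) ∘ₗ
        ((Coalgebra.comul (R := K) (A := H)).lTensor H) := by
    apply TensorProduct.ext'
    intro x y
    simp
  ext h
  simp only [conv, LinearMap.comp_apply, e1, e2]
  have c1 := LinearMap.congr_fun K1
    ((TensorProduct.map (TensorProduct.map f g) w)
      (((Coalgebra.comul (R := K) (A := H)).rTensor H) (Coalgebra.comul h)))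
  simp only [LinearMap.comp_apply] at c1
  rw [c1]
  have c2 := LinearMap.congr_fun K2
    (((Coalgebra.comul (R := K) (A := H)).rTensor H) (Coalgebra.comul h))
  simp only [LinearMap.comp_apply] at c2
  rw [c2]
  simp only [LinearEquiv.coe_coe, Coalgebra.coassoc_apply]

lemma conv_inv_unique (μ : B →ₗ[K] B →ₗ[K] B) (e : B)
    (hμ : ∀ a b c, μ (μ a b) c = μ a (μ b c))
    (hl : ∀ b, μ e b = b) (hr : ∀ b, μ b e = b)
    {f g w : H →ₗ[K] B} (h1 : conv μ g f = oneC e) (h2 : conv μ f w = oneC e) :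
    g = w := by
  calc g = conv μ g (oneC e) := (conv_one μ e hr g).symm
    _ = conv μ g (conv μ f w) := by rw [h2]
    _ = conv μ (conv μ g f) w := (conv_assoc μ hμ g f w).symm
    _ = conv μ (oneC e) w := by rw [h1]
    _ = w := one_conv μ e hl w

section Antipode

lemma S_one : 𝒮 (1 : H) = 1 := by
  have := HopfAlgebra.mul_antipode_rTensor_comul_apply (R := K) (A := H) (1 : H)
  simpa [Algebra.TensorProduct.one_def] using this

/-- The product representation of `comul (h * k)`. -/
noncomputable def mulRepr {h k : H} {ι κ : Type*} (ℋ : Coalgebra.Repr K h ι) (𝒦 : Coalgebra.Repr K k κ) :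
    Coalgebra.Repr K (h * k) (ι × κ) where
  index := ℋ.index ×ˢ 𝒦.index
  left := fun p => ℋ.left p.1 * 𝒦.left p.2
  right := fun p => ℋ.right p.1 * 𝒦.right p.2
  eq := by
    rw [Bialgebra.comul_mul, ← ℋ.eq, ← 𝒦.eq, Finset.sum_mul_sum]
    rw [Finset.sum_product]
    simp [Algebra.TensorProduct.tmul_mul_tmul]

noncomputable def μH : H →ₗ[K] H →ₗ[K] H := LinearMap.mul K H

lemma conv_add_left (μ : B →ₗ[K] B →ₗ[K] B) (f f' g : H →ₗ[K] B) :
    conv μ (f + f') g = conv μ f g + conv μ f' g := by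
  ext h
  rw [LinearMap.add_apply, conv_apply_repr μ _ _ (Coalgebra.Repr.arbitrary K h),
    conv_apply_repr μ f g (Coalgebra.Repr.arbitrary K h),
    conv_apply_repr μ f' g (Coalgebra.Repr.arbitrary K h), ← Finset.sum_add_distrib]
  simp

lemma conv_add_right (μ : B →ₗ[K] B →ₗ[K] B) (f g g' : H →ₗ[K] B) :
    conv μ f (g + g') = conv μ f g + conv μ f g' := by
  ext h
  rw [LinearMap.add_apply, conv_apply_repr μ _ _ (Coalgebra.Repr.arbitrary K h),
    conv_apply_repr μ f g (Coalgebra.Repr.arbitrary K h),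
    conv_apply_repr μ f g' (Coalgebra.Repr.arbitrary K h), ← Finset.sum_add_distrib]
  simp

lemma conv_smul_left (μ : B →ₗ[K] B →ₗ[K] B) (c : K) (f g : H →ₗ[K] B) :
    conv μ (c • f) g = c • conv μ f g := by
  ext h
  rw [LinearMap.smul_apply, conv_apply_repr μ _ _ (Coalgebra.Repr.arbitrary K h),
    conv_apply_repr μ f g (Coalgebra.Repr.arbitrary K h), Finset.smul_sum]
  simp

lemma conv_smul_right (μ : B →ₗ[K] B →ₗ[K] B) (c : K) (f g : H →ₗ[K] B) :
    conv μ f (c • g) = c • conv μ f g := by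
  ext h
  rw [LinearMap.smul_apply, conv_apply_repr μ _ _ (Coalgebra.Repr.arbitrary K h),
    conv_apply_repr μ f g (Coalgebra.Repr.arbitrary K h), Finset.smul_sum]
  simp

noncomputable def μ₂ : (H →ₗ[K] H) →ₗ[K] (H →ₗ[K] H) →ₗ[K] (H →ₗ[K] H) :=
  LinearMap.mk₂ K (conv (μH (K := K) (H := H)))
    (conv_add_left _) (conv_smul_left _) (conv_add_right _) (conv_smul_right _)

lemma conv2_apply (F G : H →ₗ[K] H →ₗ[K] H) {h k : H}
    {ι κ : Type*} (ℋ : Coalgebra.Repr K h ι) (𝒦 : Coalgebra.Repr K k κ) :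
    conv μ₂ F G h k = ∑ i ∈ ℋ.index, ∑ j ∈ 𝒦.index,
      F (ℋ.left i) (𝒦.left j) * G (ℋ.right i) (𝒦.right j) := by
  rw [conv_apply_repr _ _ _ ℋ, LinearMap.sum_apply]
  refine Finset.sum_congr rfl fun i _ => ?_
  show conv μH (F (ℋ.left i)) (G (ℋ.right i)) k = _
  rw [conv_apply_repr _ _ _ 𝒦]
  rfl

noncomputable def nF : H →ₗ[K] H →ₗ[K] H :=
  LinearMap.mk₂ K (fun h k => 𝒮 k * 𝒮 h)
    (fun a b c => by simp [map_add, mul_add]) (fun c a b => by simp)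
    (fun a b c => by simp [map_add, add_mul]) (fun c a b => by simp)

noncomputable def smF : H →ₗ[K] H →ₗ[K] H :=
  LinearMap.mk₂ K (fun h k => 𝒮 (h * k))
    (fun a b c => by simp [add_mul]) (fun c a b => by simp [smul_mul_assoc])
    (fun a b c => by simp [mul_add]) (fun c a b => by simp [mul_smul_comm])

lemma conv2_nF_mul : conv μ₂ nF (μH (K := K) (H := H)) = oneC (oneC (1 : H)) := by
  ext h k
  rw [conv2_apply nF μH (Coalgebra.Repr.arbitrary K h) (Coalgebra.Repr.arbitrary K k),
    Finset.sum_comm]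
  set ℋ := Coalgebra.Repr.arbitrary K h
  set 𝒦 := Coalgebra.Repr.arbitrary K k
  have step : ∀ j ∈ 𝒦.index, (∑ i ∈ ℋ.index,
      nF (K := K) (ℋ.left i) (𝒦.left j) * μH (K := K) (ℋ.right i) (𝒦.right j)) =
      ε h • (𝒮 (𝒦.left j) * 𝒦.right j) := by
    intro j _
    have : ∀ i ∈ ℋ.index, nF (K := K) (ℋ.left i) (𝒦.left j) * μH (K := K) (ℋ.right i) (𝒦.right j) =
        𝒮 (𝒦.left j) * ((𝒮 (ℋ.left i) * ℋ.right i) * 𝒦.right j) := by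
      intro i _
      show (𝒮 (𝒦.left j) * 𝒮 (ℋ.left i)) * (ℋ.right i * 𝒦.right j) = _
      simp [mul_assoc]
    rw [Finset.sum_congr rfl this, ← Finset.mul_sum, ← Finset.sum_mul,
      HopfAlgebra.sum_antipode_mul_eq_smul (R := K) ℋ, smul_mul_assoc, one_mul,
      mul_smul_comm]
  rw [Finset.sum_congr rfl step, ← Finset.smul_sum,
    HopfAlgebra.sum_antipode_mul_eq_smul (R := K) 𝒦]
  rfl

lemma conv2_mul_smF : conv μ₂ (μH (K := K) (H := H)) smF = oneC (oneC (1 : H)) := by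
  ext h k
  rw [conv2_apply μH smF (Coalgebra.Repr.arbitrary K h) (Coalgebra.Repr.arbitrary K k)]
  set ℋ := Coalgebra.Repr.arbitrary K h
  set 𝒦 := Coalgebra.Repr.arbitrary K k
  have : ∑ i ∈ ℋ.index, ∑ j ∈ 𝒦.index,
      μH (K := K) (ℋ.left i) (𝒦.left j) * smF (K := K) (ℋ.right i) (𝒦.right j) =
      ∑ p ∈ (mulRepr ℋ 𝒦).index,
        (mulRepr ℋ 𝒦).left p * 𝒮 ((mulRepr ℋ 𝒦).right p) := by
    rw [show (mulRepr ℋ 𝒦).index = ℋ.index ×ˢ 𝒦.index from rfl, ← Finset.sum_product']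
    rfl
  rw [this, HopfAlgebra.sum_mul_antipode_eq_smul (R := K) (mulRepr ℋ 𝒦),
    Bialgebra.counit_mul, mul_smul]
  rfl

lemma antipode_mul (a b : H) : 𝒮 (a * b) = 𝒮 b * 𝒮 a := by
  have hμ : ∀ x y z : H →ₗ[K] H, μ₂ (μ₂ x y) z = μ₂ x (μ₂ y z) := by
    intro x y z
    exact conv_assoc (μH (K := K) (H := H)) (fun a b c => mul_assoc a b c) x y z
  have heq : nF (K := K) (H := H) = smF := by
    refine conv_inv_unique (B := H →ₗ[K] H) μ₂ (oneC (1 : H)) hμ ?_ ?_ conv2_nF_mul conv2_mul_smF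
    · intro f
      exact one_conv (μH (K := K) (H := H)) 1 (fun b => one_mul b) f
    · intro f
      exact conv_one (μH (K := K) (H := H)) 1 (fun b => mul_one b) f
  have := LinearMap.congr_fun (LinearMap.congr_fun heq a) b
  simpa [nF, smF] using this.symm

noncomputable def ΔL : H →ₗ[K] H ⊗[K] H := Coalgebra.comul

noncomputable def μT : (H ⊗[K] H) →ₗ[K] (H ⊗[K] H) →ₗ[K] (H ⊗[K] H) :=
  LinearMap.mul K (H ⊗[K] H)

noncomputable def wF : H →ₗ[K] H ⊗[K] H :=
  TensorProduct.map 𝒮 𝒮 ∘ₗ (TensorProduct.comm K H H).toLinearMap ∘ₗ Coalgebra.comul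

noncomputable def dsF : H →ₗ[K] H ⊗[K] H :=
  Coalgebra.comul ∘ₗ HopfAlgebra.antipode (R := K)

noncomputable def ψ : H ⊗[K] (H ⊗[K] H) →ₗ[K] H ⊗[K] H :=
  ((LinearMap.mul' K H ∘ₗ TensorProduct.map (HopfAlgebra.antipode (R := K)) LinearMap.id).rTensor H)
    ∘ₗ (TensorProduct.assoc K H H H).symm.toLinearMap

lemma ψ_tmul (x a b : H) : ψ (K := K) (x ⊗ₜ (a ⊗ₜ b)) = (𝒮 x * a) ⊗ₜ b := by
  simp [ψ]

lemma smul_one_tmul (x : H) (t : H ⊗[K] H) :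
    ((𝒮 x) ⊗ₜ (1 : H)) * t = ψ (x ⊗ₜ t) := by
  induction t using TensorProduct.induction_on with
  | zero => simp
  | tmul a b => simp [ψ_tmul, Algebra.TensorProduct.tmul_mul_tmul]
  | add u v hu hv => rw [TensorProduct.tmul_add, map_add, ← hu, ← hv, mul_add]

lemma L1 (y : H) {ι : Type*} (𝒯 : Coalgebra.Repr K y ι) :
    ∑ j ∈ 𝒯.index, ((𝒮 (𝒯.left j)) ⊗ₜ (1 : H)) * Coalgebra.comul (R := K) (𝒯.right j) =
      (1 : H) ⊗ₜ y := by
  have e1 : ∑ j ∈ 𝒯.index, ((𝒮 (𝒯.left j)) ⊗ₜ (1 : H)) * Coalgebra.comul (R := K) (𝒯.right j)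
      = ψ ((Coalgebra.comul (R := K) (A := H)).lTensor H (Coalgebra.comul y)) := by
    rw [← 𝒯.eq, map_sum, map_sum]
    exact Finset.sum_congr rfl fun j _ => by rw [LinearMap.lTensor_tmul, smul_one_tmul]
  rw [e1, ← Coalgebra.coassoc_apply, ← 𝒯.eq, map_sum, map_sum, map_sum]
  have e2 : ∀ j ∈ 𝒯.index,
      ψ ((TensorProduct.assoc K H H H)
        (((Coalgebra.comul (R := K)).rTensor H) (𝒯.left j ⊗ₜ 𝒯.right j))) =
      Coalgebra.counit (R := K) (𝒯.left j) • ((1 : H) ⊗ₜ[K] 𝒯.right j) := by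
    intro j _
    set 𝒰 := Coalgebra.Repr.arbitrary K (𝒯.left j)
    rw [LinearMap.rTensor_tmul, ← 𝒰.eq, TensorProduct.sum_tmul, map_sum, map_sum]
    have : ∀ m ∈ 𝒰.index,
        ψ ((TensorProduct.assoc K H H H) ((𝒰.left m ⊗ₜ[K] 𝒰.right m) ⊗ₜ[K] 𝒯.right j)) =
        (𝒮 (𝒰.left m) * 𝒰.right m) ⊗ₜ[K] 𝒯.right j := by
      intro m _
      rw [TensorProduct.assoc_tmul, ψ_tmul]
    rw [Finset.sum_congr rfl this, ← TensorProduct.sum_tmul,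
      HopfAlgebra.sum_antipode_mul_eq_smul (R := K) 𝒰, TensorProduct.smul_tmul']
  rw [Finset.sum_congr rfl e2]
  have e3 : ∀ j ∈ 𝒯.index,
      Coalgebra.counit (R := K) (𝒯.left j) • ((1 : H) ⊗ₜ[K] 𝒯.right j) =
      (1 : H) ⊗ₜ[K] (Coalgebra.counit (R := K) (𝒯.left j) • 𝒯.right j) := by
    intro j _
    rw [TensorProduct.tmul_smul]
  rw [Finset.sum_congr rfl e3, ← TensorProduct.tmul_sum, counit_smul_sum_left]

noncomputable def Φ : (H ⊗[K] H) ⊗[K] H →ₗ[K] H ⊗[K] H :=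
  LinearMap.mul' K (H ⊗[K] H) ∘ₗ
    TensorProduct.map
      (TensorProduct.map (HopfAlgebra.antipode (R := K)) (HopfAlgebra.antipode (R := K)) ∘ₗ
        (TensorProduct.comm K H H).toLinearMap)
      (Coalgebra.comul (R := K))

lemma Φ_tmul (x y z : H) :
    Φ (K := K) ((x ⊗ₜ y) ⊗ₜ z) = ((𝒮 y) ⊗ₜ (𝒮 x)) * Coalgebra.comul (R := K) z := by
  simp [Φ]

lemma wF_mul_comul (u : H ⊗[K] H) (z : H) :
    (TensorProduct.map (HopfAlgebra.antipode (R := K)) (HopfAlgebra.antipode (R := K))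
      ((TensorProduct.comm K H H) u)) * Coalgebra.comul (R := K) z = Φ (u ⊗ₜ z) := by
  induction u using TensorProduct.induction_on with
  | zero => simp
  | tmul a b => rw [Φ_tmul]; simp
  | add u v hu hv =>
      simp only [map_add, add_mul, TensorProduct.add_tmul, hu, hv]

lemma conv_wF_Δ : conv (μT (K := K) (H := H)) wF ΔL = oneC (1 : H ⊗[K] H) := by
  ext h
  set ℛ := Coalgebra.Repr.arbitrary K h
  rw [conv_apply_repr _ _ _ ℛ]
  have e1 : ∀ i ∈ ℛ.index, μT (wF (ℛ.left i)) (ΔL (ℛ.right i)) =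
      Φ ((Coalgebra.comul (R := K)).rTensor H (ℛ.left i ⊗ₜ ℛ.right i)) := by
    intro i _
    simp only [μT, LinearMap.mul_apply', ΔL, wF, LinearMap.comp_apply, LinearEquiv.coe_coe,
      LinearMap.rTensor_tmul]
    exact wF_mul_comul _ _
  rw [Finset.sum_congr rfl e1, ← map_sum, ← map_sum, ℛ.eq, ← Coalgebra.coassoc_symm_apply,
    ← ℛ.eq, map_sum, map_sum, map_sum]
  have e2 : ∀ i ∈ ℛ.index,
      Φ ((TensorProduct.assoc K H H H).symm
        ((Coalgebra.comul (R := K)).lTensor H (ℛ.left i ⊗ₜ ℛ.right i))) =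
      (1 : H) ⊗ₜ[K] (𝒮 (ℛ.left i) * ℛ.right i) := by
    intro i _
    set 𝒮i := Coalgebra.Repr.arbitrary K (ℛ.right i)
    rw [LinearMap.lTensor_tmul, ← 𝒮i.eq, TensorProduct.tmul_sum, map_sum, map_sum]
    have e3 : ∀ j ∈ 𝒮i.index,
        Φ ((TensorProduct.assoc K H H H).symm (ℛ.left i ⊗ₜ (𝒮i.left j ⊗ₜ 𝒮i.right j))) =
        ((1 : H) ⊗ₜ (𝒮 (ℛ.left i))) *
          (((𝒮 (𝒮i.left j)) ⊗ₜ (1 : H)) * Coalgebra.comul (R := K) (𝒮i.right j)) := by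
      intro j _
      rw [TensorProduct.assoc_symm_tmul, Φ_tmul, ← mul_assoc]
      congr 1
      rw [Algebra.TensorProduct.tmul_mul_tmul, one_mul, mul_one]
    rw [Finset.sum_congr rfl e3, ← Finset.mul_sum, L1 (ℛ.right i) 𝒮i,
      Algebra.TensorProduct.tmul_mul_tmul, one_mul]
  rw [Finset.sum_congr rfl e2, ← TensorProduct.tmul_sum,
    HopfAlgebra.sum_antipode_mul_eq_smul (R := K) ℛ, oneC_apply, Algebra.TensorProduct.one_def,
    TensorProduct.tmul_smul]

lemma conv_Δ_dsF : conv (μT (K := K) (H := H)) ΔL dsF = oneC (1 : H ⊗[K] H) := by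
  ext h
  set ℛ := Coalgebra.Repr.arbitrary K h
  rw [conv_apply_repr _ _ _ ℛ]
  have e1 : ∀ i ∈ ℛ.index, μT (ΔL (ℛ.left i)) (dsF (ℛ.right i)) =
      Coalgebra.comul (R := K) (ℛ.left i * 𝒮 (ℛ.right i)) := by
    intro i _
    simp only [μT, LinearMap.mul_apply', ΔL, dsF, LinearMap.comp_apply]
    rw [Bialgebra.comul_mul]
  rw [Finset.sum_congr rfl e1, ← map_sum, HopfAlgebra.sum_mul_antipode_eq_smul (R := K) ℛ,
    map_smul, Bialgebra.comul_one, oneC_apply]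

lemma wF_eq_dsF : wF (K := K) (H := H) = dsF := by
  refine conv_inv_unique (μT (K := K) (H := H)) 1 (fun a b c => mul_assoc a b c)
    (fun b => one_mul b) (fun b => mul_one b) conv_wF_Δ conv_Δ_dsF

lemma comul_antipode_repr {h : H} {ι : Type*} (ℛ : Coalgebra.Repr K h ι) :
    Coalgebra.comul (R := K) (𝒮 h) =
      ∑ i ∈ ℛ.index, (𝒮 (ℛ.right i)) ⊗ₜ[K] (𝒮 (ℛ.left i)) := by
  have := LinearMap.congr_fun (wF_eq_dsF (K := K) (H := H)) h
  rw [show dsF (K := K) h = Coalgebra.comul (R := K) (𝒮 h) from rfl] at this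
  rw [← this]
  show TensorProduct.map _ _ ((TensorProduct.comm K H H) (Coalgebra.comul h)) = _
  rw [← ℛ.eq, map_sum, map_sum]
  simp

/-- A representation of `comul (𝒮 h)` from one of `comul h`. -/
noncomputable def antipodeRepr {h : H} {ι : Type*} (ℛ : Coalgebra.Repr K h ι) :
    Coalgebra.Repr K (𝒮 h) ι where
  index := ℛ.index
  left := fun i => 𝒮 (ℛ.right i)
  right := fun i => 𝒮 (ℛ.left i)
  eq := (comul_antipode_repr ℛ).symm

/-- Reindex a representation so that its index type lives in any desired universe. -/
noncomputable def reindexRepr.{w} {h : H} {ι : Type*} (ℛ : Coalgebra.Repr K h ι) :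
    Coalgebra.Repr K h (ULift.{w} (Fin ℛ.index.card)) :=
  ⟨(Finset.univ : Finset (ULift.{w} (Fin ℛ.index.card))),
   fun i => ℛ.left (ℛ.index.equivFin.symm i.down),
   fun i => ℛ.right (ℛ.index.equivFin.symm i.down),
   by
    rw [← ℛ.eq]
    rw [← Finset.sum_coe_sort ℛ.index (fun i => ℛ.left i ⊗ₜ[K] ℛ.right i)]
    rw [← Equiv.sum_comp ℛ.index.equivFin.symm
      (fun i => ℛ.left (i : ι) ⊗ₜ[K] ℛ.right (i : ι))]
    exact (Equiv.sum_comp (Equiv.ulift.symm)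
      (fun u : ULift.{w} (Fin ℛ.index.card) =>
        ℛ.left (ℛ.index.equivFin.symm u.down) ⊗ₜ[K]
          ℛ.right (ℛ.index.equivFin.symm u.down))).symm⟩

end Antipode

end Stmt4Aux

set_option maxHeartbeats 1000000
set_option synthInstance.maxHeartbeats 400000

/-- Assume the antipode `S` of `H` is involutive.  In the `K`-algebra
`A^e ⋈ H` (the `K`-module `A ⊗[K] Aᵐᵒᵖ ⊗[K] H` with multiplication determined by
`(a ⊗ b̄ ⋈ h)(c ⊗ d̄ ⋈ k) = Σ a (h₍₁₎ • c) ⊗ (d (S k₍₂₎ • b))‾ ⋈ h₍₂₎ k₍₁₎` and unit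
`1 ⊗ 1̄ ⋈ 1`), the `K`-linear map `τ` determined by `τ(a ⊗ b̄ ⋈ h) = b ⊗ ā ⋈ S(h)` is an
anti-automorphism of the algebra; moreover `τ ∘ τ = id` and `τ(t_L(a)) = s_L(a)`. -/
theorem stmt4 (K H A : Type*) [CommRing K] [Ring H] [HopfAlgebra K H]
    [Ring A] [Algebra K A] [Module H A] [IsScalarTower K H A] [SMulCommClass K H A]
    (hact_mul : ∀ (h : H) (a b : A) {ι : Type*} (ℋ : Coalgebra.Repr K h ι),
      h • (a * b) = ∑ i ∈ ℋ.index, (ℋ.left i • a) * (ℋ.right i • b))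
    (hact_one : ∀ h : H, h • (1 : A) = algebraMap K A (Coalgebra.counit (R := K) h))
    (hS : ∀ h : H, HopfAlgebra.antipode (R := K) (HopfAlgebra.antipode (R := K) h) = h)
    (mul : (A ⊗[K] (Aᵐᵒᵖ ⊗[K] H)) →ₗ[K] (A ⊗[K] (Aᵐᵒᵖ ⊗[K] H)) →ₗ[K] (A ⊗[K] (Aᵐᵒᵖ ⊗[K] H)))
    (hmul : ∀ (a b c d : A) (h k : H) {ι : Type*} (ℋ : Coalgebra.Repr K h ι) {κ : Type*} (𝒦 : Coalgebra.Repr K k κ),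
        mul (a ⊗ₜ (op b ⊗ₜ h)) (c ⊗ₜ (op d ⊗ₜ k)) =
          ∑ i ∈ ℋ.index, ∑ j ∈ 𝒦.index,
            (a * (ℋ.left i • c)) ⊗ₜ
              (op (d * (HopfAlgebra.antipode (R := K) (𝒦.right j) • b)) ⊗ₜ
                (ℋ.right i * 𝒦.left j)))
    (hassoc : ∀ x y z, mul (mul x y) z = mul x (mul y z))
    (hone : ∀ x, mul ((1:A) ⊗ₜ (op (1:A) ⊗ₜ (1:H))) x = x ∧
        mul x ((1:A) ⊗ₜ (op (1:A) ⊗ₜ (1:H))) = x)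
    (anti : (A ⊗[K] (Aᵐᵒᵖ ⊗[K] H)) →ₗ[K] (A ⊗[K] (Aᵐᵒᵖ ⊗[K] H)))
    (hanti : ∀ (a b : A) (h : H),
        anti (a ⊗ₜ (op b ⊗ₜ h)) = b ⊗ₜ (op a ⊗ₜ HopfAlgebra.antipode (R := K) h)) :
    Function.Bijective anti ∧
    anti ((1:A) ⊗ₜ (op (1:A) ⊗ₜ (1:H))) = (1:A) ⊗ₜ (op (1:A) ⊗ₜ (1:H)) ∧
    (∀ ξ η, anti (mul ξ η) = mul (anti η) (anti ξ)) ∧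
    (∀ ξ, anti (anti ξ) = ξ) ∧
    (∀ a : A, anti ((1:A) ⊗ₜ (op a ⊗ₜ (1:H))) = a ⊗ₜ (op (1:A) ⊗ₜ (1:H))) := by
  have hinv : ∀ ξ, anti (anti ξ) = ξ := by
    intro ξ
    induction ξ using TensorProduct.induction_on with
    | zero => simp
    | tmul a y =>
      induction y using TensorProduct.induction_on with
      | zero => simp [TensorProduct.tmul_zero]
      | tmul x h =>
        rw [← op_unop x, hanti, hanti, hS]
      | add u v hu hv =>
        rw [TensorProduct.tmul_add, map_add, map_add, hu, hv]
    | add u v hu hv => rw [map_add, map_add, hu, hv]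
  have key : ∀ (a b c d : A) (h k : H),
      anti (mul (a ⊗ₜ (op b ⊗ₜ h)) (c ⊗ₜ (op d ⊗ₜ k))) =
        mul (anti (c ⊗ₜ (op d ⊗ₜ k))) (anti (a ⊗ₜ (op b ⊗ₜ h))) := by
    intro a b c d h k
    set ℋ0 := Coalgebra.Repr.arbitrary K h with hℋ0
    set 𝒦0 := Coalgebra.Repr.arbitrary K k with h𝒦0
    have L : anti (mul (a ⊗ₜ (op b ⊗ₜ h)) (c ⊗ₜ (op d ⊗ₜ k))) =
        ∑ j : Fin 𝒦0.index.card, ∑ i : Fin ℋ0.index.card,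
          (d * (HopfAlgebra.antipode (R := K) (𝒦0.right (𝒦0.index.equivFin.symm j)) • b)) ⊗ₜ
            (op (a * (ℋ0.left (ℋ0.index.equivFin.symm i) • c)) ⊗ₜ
              (HopfAlgebra.antipode (R := K) (𝒦0.left (𝒦0.index.equivFin.symm j)) *
                HopfAlgebra.antipode (R := K) (ℋ0.right (ℋ0.index.equivFin.symm i)))) := by
      rw [hmul a b c d h k (Stmt4Aux.reindexRepr ℋ0) (Stmt4Aux.reindexRepr 𝒦0)]
      simp only [map_sum]
      rw [Finset.sum_comm]
      refine Fintype.sum_equiv Equiv.ulift _ _ fun x => ?_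
      refine Fintype.sum_equiv Equiv.ulift _ _ fun y => ?_
      rw [hanti]
      simp only [Stmt4Aux.reindexRepr, Stmt4Aux.antipode_mul, Equiv.ulift_apply]
    have R : mul (anti (c ⊗ₜ (op d ⊗ₜ k))) (anti (a ⊗ₜ (op b ⊗ₜ h))) =
        ∑ j : Fin 𝒦0.index.card, ∑ i : Fin ℋ0.index.card,
          (d * (HopfAlgebra.antipode (R := K) (𝒦0.right (𝒦0.index.equivFin.symm j)) • b)) ⊗ₜ
            (op (a * (ℋ0.left (ℋ0.index.equivFin.symm i) • c)) ⊗ₜ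
              (HopfAlgebra.antipode (R := K) (𝒦0.left (𝒦0.index.equivFin.symm j)) *
                HopfAlgebra.antipode (R := K) (ℋ0.right (ℋ0.index.equivFin.symm i)))) := by
      rw [hanti, hanti, hmul d c b a _ _
        (Stmt4Aux.reindexRepr (Stmt4Aux.antipodeRepr 𝒦0))
        (Stmt4Aux.reindexRepr (Stmt4Aux.antipodeRepr ℋ0))]
      refine Fintype.sum_equiv Equiv.ulift _ _ fun x => ?_
      refine Fintype.sum_equiv Equiv.ulift _ _ fun y => ?_
      simp only [Stmt4Aux.reindexRepr, Stmt4Aux.antipodeRepr, Equiv.ulift_apply, hS]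
      rfl
    rw [L, R]
  have hanti_mul : ∀ ξ η, anti (mul ξ η) = mul (anti η) (anti ξ) := by
    intro ξ η
    induction ξ using TensorProduct.induction_on with
    | zero => simp only [map_zero, LinearMap.zero_apply, LinearMap.map_zero]
    | tmul a y =>
      induction y using TensorProduct.induction_on with
      | zero => simp only [TensorProduct.tmul_zero, map_zero, LinearMap.zero_apply,
          LinearMap.map_zero]
      | tmul x h =>
        induction η using TensorProduct.induction_on with
        | zero => simp only [map_zero, LinearMap.zero_apply, LinearMap.map_zero]
        | tmul c z =>
          induction z using TensorProduct.induction_on with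
          | zero => simp only [TensorProduct.tmul_zero, map_zero, LinearMap.zero_apply,
              LinearMap.map_zero]
          | tmul y k =>
            rw [← op_unop x, ← op_unop y]
            exact key a x.unop c y.unop h k
          | add u v hu hv =>
            simp only [TensorProduct.tmul_add, map_add, LinearMap.add_apply, hu, hv]
        | add u v hu hv =>
          simp only [map_add, LinearMap.add_apply, hu, hv]
      | add u v hu hv =>
        simp only [TensorProduct.tmul_add, map_add, LinearMap.add_apply, hu, hv]
    | add u v hu hv =>
      simp only [map_add, LinearMap.add_apply, hu, hv]
  refine ⟨Function.Involutive.bijective hinv, ?_, hanti_mul, hinv, ?_⟩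
  · rw [hanti, Stmt4Aux.S_one]
  · intro a
    rw [hanti, Stmt4Aux.S_one]
end

section
/- The K-bilinear multiplication determined on pure tensors by (a ⊗ b̄ ⋈ σ)(c ⊗ d̄ ⋈ τ) = a σ(c) ⊗ (d τ⁻¹(b))‾ ⋈ στ is well defined, associative, and has unit element 1 ⊗ 1̄ ⋈ e; hence it endows the K-module A ⊗[K] A^op ⊗[K] K[G] with the structure of a unital associative K-algebra, denoted A^e ⋈ G. -/
open TensorProduct MulOpposite

set_option maxRecDepth 10000
set_option synthInstance.maxHeartbeats 1000000
set_option maxHeartbeats 2000000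

noncomputable section
namespace Stmt8

variable (K A G : Type*) [CommRing K] [Ring A] [Algebra K A]
    [Group G] [MulSemiringAction G A] [SMulCommClass G K A]

abbrev N : Type _ := Aᵐᵒᵖ ⊗[K] MonoidAlgebra K G
abbrev M : Type _ := A ⊗[K] N K A G

def act (σ : G) : A →ₗ[K] A := DistribMulAction.toLinearMap K A σ

def actOp (σ : G) : Aᵐᵒᵖ →ₗ[K] Aᵐᵒᵖ :=
  (opLinearEquiv K : A ≃ₗ[K] Aᵐᵒᵖ).toLinearMap ∘ₗ act K A G σ ∘ₗ
    (opLinearEquiv K : A ≃ₗ[K] Aᵐᵒᵖ).symm.toLinearMap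

/-- `d ⊗ single τ k ↦ k • (φ τ d ⊗ single (ψ τ) 1)`. -/
def diag (φ : G → Aᵐᵒᵖ →ₗ[K] Aᵐᵒᵖ) (ψ : G → G) : N K A G →ₗ[K] N K A G :=
  TensorProduct.lift (((Finsupp.lsum K fun τ : G =>
    LinearMap.toSpanSingleton K (Aᵐᵒᵖ →ₗ[K] N K A G)
      (((TensorProduct.mk K Aᵐᵒᵖ (MonoidAlgebra K G)).flip
        (MonoidAlgebra.single (ψ τ) 1)).comp (φ τ))) ∘ₗ
      (MonoidAlgebra.coeffLinearEquiv K).toLinearMap).flip)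

@[simp] lemma diag_tmul (φ : G → Aᵐᵒᵖ →ₗ[K] Aᵐᵒᵖ) (ψ : G → G) (d : Aᵐᵒᵖ) (τ : G) (k : K) :
    diag K A G φ ψ (d ⊗ₜ MonoidAlgebra.single τ k) = k • ((φ τ d) ⊗ₜ MonoidAlgebra.single (ψ τ) 1) := by
  simp only [diag, TensorProduct.lift.tmul, LinearMap.flip_apply, LinearMap.coe_comp,
    Function.comp_apply, LinearEquiv.coe_coe, MonoidAlgebra.coeffLinearEquiv_apply,
    MonoidAlgebra.coeff_single]
  erw [Finsupp.lsum_single]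
  simp

def Vmap : N K A G →ₗ[K] N K A G := diag K A G (fun τ => actOp K A G τ) id
def Vinv : N K A G →ₗ[K] N K A G := diag K A G (fun τ => actOp K A G τ⁻¹) id

def Pmap (σ : G) : M K A G →ₗ[K] M K A G :=
  TensorProduct.map (act K A G σ) (diag K A G (fun _ => LinearMap.id) (σ * ·))

def Lam : A →ₗ[K] Module.End K (M K A G) :=
  (LinearMap.rTensorHom (N K A G)) ∘ₗ (LinearMap.mul K A)

def Pi' : MonoidAlgebra K G →ₗ[K] Module.End K (M K A G) :=
  (Finsupp.lsum K fun σ => LinearMap.toSpanSingleton K _ (Pmap K A G σ)) ∘ₗ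
    (MonoidAlgebra.coeffLinearEquiv K).toLinearMap

def Rr : Aᵐᵒᵖ →ₗ[K] Module.End K (M K A G) :=
  (LinearMap.lTensorHom A) ∘ₗ
  ((LinearMap.mulLeft K (Vinv K A G)) ∘ₗ (LinearMap.mulRight K (Vmap K A G))) ∘ₗ
  (LinearMap.rTensorHom (MonoidAlgebra K G)) ∘ₗ (LinearMap.mul K Aᵐᵒᵖ)

def hN : N K A G →ₗ[K] Module.End K (M K A G) :=
  TensorProduct.lift
    (((LinearMap.llcomp K (MonoidAlgebra K G) (Module.End K (M K A G)) (Module.End K (M K A G))).flip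
        (Pi' K A G)) ∘ₗ (LinearMap.mul K (Module.End K (M K A G))).flip ∘ₗ Rr K A G)

def mulMap : M K A G →ₗ[K] M K A G →ₗ[K] M K A G :=
  TensorProduct.lift
    (((LinearMap.llcomp K (N K A G) (Module.End K (M K A G)) (Module.End K (M K A G))).flip
        (hN K A G)) ∘ₗ (LinearMap.mul K (Module.End K (M K A G))) ∘ₗ Lam K A G)

lemma mulMap_tmul (a c : A) (b d : Aᵐᵒᵖ) (σ τ : G) (k l : K) :
    mulMap K A G (a ⊗ₜ (b ⊗ₜ MonoidAlgebra.single σ k)) (c ⊗ₜ (d ⊗ₜ MonoidAlgebra.single τ l)) =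
      (k * l) • ((a * σ • c) ⊗ₜ ((op (τ⁻¹ • b.unop) * d) ⊗ₜ MonoidAlgebra.single (σ * τ) 1)) := by
  simp only [mulMap, hN, Lam, Pi', Rr, Pmap, Vmap, Vinv, act, actOp,
    TensorProduct.lift.tmul, LinearMap.coe_comp, Function.comp_apply,
    LinearMap.flip_apply, LinearMap.llcomp_apply, LinearMap.mul_apply', LinearEquiv.coe_coe,
    MonoidAlgebra.coeffLinearEquiv_apply, MonoidAlgebra.coeff_single]
  erw [Finsupp.lsum_single]
  simp only [Module.End.mul_apply, LinearMap.mulLeft_apply, LinearMap.mulRight_apply,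
    LinearMap.mul_apply', LinearMap.toSpanSingleton_apply, LinearMap.smul_apply,
    LinearMap.coe_rTensorHom, LinearMap.coe_lTensorHom,
    LinearMap.rTensor_tmul, LinearMap.lTensor_tmul, TensorProduct.map_tmul, diag_tmul,
    LinearMap.map_smul, tmul_smul, smul_tmul', LinearMap.id_coe, id_eq,
    LinearMap.coe_comp, Function.comp_apply, LinearEquiv.coe_coe,
    coe_opLinearEquiv, coe_opLinearEquiv_symm, coe_opLinearEquiv_toLinearMap,
    coe_opLinearEquiv_symm_toLinearMap, DistribMulAction.toLinearMap, DistribSMul.toLinearMap_apply,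
    unop_op, unop_mul, op_mul, op_unop]
  simp only [smul_mul', inv_smul_smul, op_mul, ← smul_tmul', map_smul, diag_tmul]
  simp only [LinearMap.id_coe, id_eq, one_mul, mul_one, ← smul_tmul', tmul_smul, smul_smul]
  rw [op_unop]


lemma M_induction (p : M K A G → Prop) (h0 : p 0)
    (hadd : ∀ x y, p x → p y → p (x + y))
    (hgen : ∀ (a : A) (b : Aᵐᵒᵖ) (σ : G) (k : K), p (a ⊗ₜ (b ⊗ₜ MonoidAlgebra.single σ k))) :
    ∀ x, p x := by
  intro x
  induction x using TensorProduct.induction_on with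
  | zero => exact h0
  | add u v hu hv => exact hadd u v hu hv
  | tmul a n =>
    induction n using TensorProduct.induction_on with
    | zero => simpa [tmul_zero] using h0
    | add u v hu hv => rw [tmul_add]; exact hadd _ _ hu hv
    | tmul b f =>
      induction f using MonoidAlgebra.induction_linear with
      | zero => simpa [tmul_zero] using h0
      | add u v hu hv => rw [tmul_add, tmul_add]; exact hadd _ _ hu hv
      | single σ k => exact hgen a b σ k

lemma mul_assoc' (x y z : M K A G) :
    mulMap K A G (mulMap K A G x y) z = mulMap K A G x (mulMap K A G y z) := by
  induction x using M_induction K A G with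
  | h0 => simp only [map_zero, LinearMap.zero_apply]
  | hadd u v hu hv => simp only [map_add, LinearMap.add_apply, hu, hv]
  | hgen a b σ k =>
    induction y using M_induction K A G with
    | h0 => simp only [map_zero, LinearMap.zero_apply, LinearMap.map_zero]
    | hadd u v hu hv => simp only [map_add, LinearMap.add_apply, LinearMap.map_add, hu, hv]
    | hgen c d τ l =>
      induction z using M_induction K A G with
      | h0 => simp only [map_zero, LinearMap.zero_apply, LinearMap.map_zero]
      | hadd u v hu hv => simp only [map_add, LinearMap.add_apply, LinearMap.map_add, hu, hv]
      | hgen e f ρ m =>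
        simp only [mulMap_tmul, map_smul, LinearMap.smul_apply, mulMap_tmul]
        rw [smul_smul, smul_smul, show k * l * (1 * m) = l * m * (k * 1) by ring]
        congr 1
        simp [mul_assoc, smul_mul', mul_smul, mul_inv_rev, unop_mul, unop_op, op_mul]

lemma one_mul' (x : M K A G) :
    mulMap K A G ((1:A) ⊗ₜ ((op (1:A)) ⊗ₜ MonoidAlgebra.single (1:G) (1:K))) x = x := by
  induction x using M_induction K A G with
  | h0 => simp only [map_zero]
  | hadd u v hu hv => rw [map_add, hu, hv]
  | hgen c d τ l =>
    simp only [mulMap_tmul, one_mul, mul_one, inv_one, one_smul, smul_one, op_one, unop_one,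
      unop_op, op_unop, mul_inv_rev]
    rw [show (MonoidAlgebra.single τ l : MonoidAlgebra K G) = l • MonoidAlgebra.single τ 1 from by
      rw [MonoidAlgebra.smul_single, smul_eq_mul, mul_one], tmul_smul, tmul_smul]

lemma mul_one' (x : M K A G) :
    mulMap K A G x ((1:A) ⊗ₜ ((op (1:A)) ⊗ₜ MonoidAlgebra.single (1:G) (1:K))) = x := by
  induction x using M_induction K A G with
  | h0 => simp only [map_zero, LinearMap.zero_apply]
  | hadd u v hu hv => rw [map_add, LinearMap.add_apply, hu, hv]
  | hgen c d τ l =>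
    simp only [mulMap_tmul, one_mul, mul_one, inv_one, one_smul, smul_one, op_one, unop_one,
      unop_op, op_unop, mul_inv_rev]
    rw [show (MonoidAlgebra.single τ l : MonoidAlgebra K G) = l • MonoidAlgebra.single τ 1 from by
      rw [MonoidAlgebra.smul_single, smul_eq_mul, mul_one], tmul_smul, tmul_smul]

end Stmt8

/-- For a commutative ring `K`, a `K`-algebra `A` and a group `G` acting on
`A` by `K`-algebra automorphisms, the `K`-bilinear multiplication determined on pure tensors of
`A ⊗[K] Aᵐᵒᵖ ⊗[K] K[G]` by `(a ⊗ b̄ ⋈ σ)(c ⊗ d̄ ⋈ τ) = a σ(c) ⊗ (d τ⁻¹(b))‾ ⋈ στ` is well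
defined, associative and unital with unit `1 ⊗ 1̄ ⋈ e`, making `A^e ⋈ G` a unital associative
`K`-algebra. -/
theorem stmt8 (K A G : Type*) [CommRing K] [Ring A] [Algebra K A]
    [Group G] [MulSemiringAction G A] [SMulCommClass G K A] :
    ∃ mul : (A ⊗[K] (Aᵐᵒᵖ ⊗[K] MonoidAlgebra K G)) →ₗ[K]
        (A ⊗[K] (Aᵐᵒᵖ ⊗[K] MonoidAlgebra K G)) →ₗ[K] (A ⊗[K] (Aᵐᵒᵖ ⊗[K] MonoidAlgebra K G)),
      (∀ (a b c d : A) (σ τ : G),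
        mul (a ⊗ₜ (op b ⊗ₜ MonoidAlgebra.of K G σ)) (c ⊗ₜ (op d ⊗ₜ MonoidAlgebra.of K G τ)) =
          (a * σ • c) ⊗ₜ (op (d * τ⁻¹ • b) ⊗ₜ MonoidAlgebra.of K G (σ * τ))) ∧
      (∀ x y z, mul (mul x y) z = mul x (mul y z)) ∧
      (∀ x, mul ((1:A) ⊗ₜ (op (1:A) ⊗ₜ MonoidAlgebra.of K G 1)) x = x) ∧
      (∀ x, mul x ((1:A) ⊗ₜ (op (1:A) ⊗ₜ MonoidAlgebra.of K G 1)) = x) := by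
  refine ⟨Stmt8.mulMap K A G, fun a b c d σ τ => ?_, Stmt8.mul_assoc' K A G,
    Stmt8.one_mul' K A G, Stmt8.mul_one' K A G⟩
  have h := Stmt8.mulMap_tmul K A G a c (op b) (op d) σ τ 1 1
  simpa [MonoidAlgebra.of_apply, op_mul] using h
end
end

section
/- Define the K-linear map ε : A^e ⋈ G → A on pure tensors by ε(a ⊗ b̄ ⋈ σ) = a σ(b), and set s_L(a) = a ⊗ 1̄ ⋈ e, t_L(a) = 1 ⊗ ā ⋈ e. Then ε(1 ⊗ 1̄ ⋈ e) = 1; for all ξ, η ∈ A^e ⋈ G one has ε(ξη) = ε(ξ · s_L(ε(η))) = ε(ξ · t_L(ε(η))); and for all x, y ∈ A and ξ ∈ A^e ⋈ G one has ε(s_L(x) t_L(y) ξ) = x ε(ξ) y. -/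
open TensorProduct MulOpposite

lemma ext3 {K A G M : Type*} [CommRing K] [Ring A] [Algebra K A]
    [Group G] [AddCommGroup M] [Module K M]
    {f g : (A ⊗[K] (Aᵐᵒᵖ ⊗[K] MonoidAlgebra K G)) →ₗ[K] M}
    (h : ∀ (a b : A) (σ : G),
      f (a ⊗ₜ (op b ⊗ₜ MonoidAlgebra.of K G σ)) = g (a ⊗ₜ (op b ⊗ₜ MonoidAlgebra.of K G σ))) :
    f = g := by
  ext a b σ
  simpa using h a (unop b) σ

/-- Let `A^e ⋈ G` be the `K`-module `A ⊗[K] Aᵐᵒᵖ ⊗[K] K[G]` with the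
unital associative multiplication determined on pure tensors by
`(a ⊗ b̄ ⋈ σ)(c ⊗ d̄ ⋈ τ) = a σ(c) ⊗ (d τ⁻¹(b))‾ ⋈ στ` and unit `1 ⊗ 1̄ ⋈ e`, and
let `s_L(a) = a ⊗ 1̄ ⋈ e`, `t_L(a) = 1 ⊗ ā ⋈ e`.  The `K`-linear counit `ε` determined on
pure tensors by `ε(a ⊗ b̄ ⋈ σ) = a σ(b)` satisfies `ε(1) = 1`,
`ε(ξη) = ε(ξ s_L(ε(η))) = ε(ξ t_L(ε(η)))`, and `ε(s_L(x) t_L(y) ξ) = x ε(ξ) y`. -/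
theorem stmt10 (K A G : Type*) [CommRing K] [Ring A] [Algebra K A]
    [Group G] [MulSemiringAction G A] [SMulCommClass G K A]
    (mul : (A ⊗[K] (Aᵐᵒᵖ ⊗[K] MonoidAlgebra K G)) →ₗ[K]
        (A ⊗[K] (Aᵐᵒᵖ ⊗[K] MonoidAlgebra K G)) →ₗ[K] (A ⊗[K] (Aᵐᵒᵖ ⊗[K] MonoidAlgebra K G)))
    (hmul : ∀ (a b c d : A) (σ τ : G),
        mul (a ⊗ₜ (op b ⊗ₜ MonoidAlgebra.of K G σ)) (c ⊗ₜ (op d ⊗ₜ MonoidAlgebra.of K G τ)) =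
          (a * σ • c) ⊗ₜ (op (d * τ⁻¹ • b) ⊗ₜ MonoidAlgebra.of K G (σ * τ)))
    (hassoc : ∀ x y z, mul (mul x y) z = mul x (mul y z))
    (hone : ∀ x, mul ((1:A) ⊗ₜ (op (1:A) ⊗ₜ MonoidAlgebra.of K G 1)) x = x ∧
        mul x ((1:A) ⊗ₜ (op (1:A) ⊗ₜ MonoidAlgebra.of K G 1)) = x)
    (ε : (A ⊗[K] (Aᵐᵒᵖ ⊗[K] MonoidAlgebra K G)) →ₗ[K] A)
    (hε : ∀ (a b : A) (σ : G),
        ε (a ⊗ₜ (op b ⊗ₜ MonoidAlgebra.of K G σ)) = a * σ • b) :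
    ε ((1:A) ⊗ₜ (op (1:A) ⊗ₜ MonoidAlgebra.of K G 1)) = 1 ∧
    (∀ ξ η, ε (mul ξ η) = ε (mul ξ (ε η ⊗ₜ (op (1:A) ⊗ₜ MonoidAlgebra.of K G 1)))) ∧
    (∀ ξ η, ε (mul ξ η) = ε (mul ξ ((1:A) ⊗ₜ (op (ε η) ⊗ₜ MonoidAlgebra.of K G 1)))) ∧
    (∀ (x y : A) (ξ : A ⊗[K] (Aᵐᵒᵖ ⊗[K] MonoidAlgebra K G)),
        ε (mul (mul (x ⊗ₜ (op (1:A) ⊗ₜ MonoidAlgebra.of K G 1))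
            ((1:A) ⊗ₜ (op y ⊗ₜ MonoidAlgebra.of K G 1))) ξ) = x * ε ξ * y) := by
  set c0 : Aᵐᵒᵖ ⊗[K] MonoidAlgebra K G := op (1:A) ⊗ₜ MonoidAlgebra.of K G 1 with hc0
  -- s_L as a linear map
  let sL : A →ₗ[K] A ⊗[K] (Aᵐᵒᵖ ⊗[K] MonoidAlgebra K G) :=
    (TensorProduct.mk K A (Aᵐᵒᵖ ⊗[K] MonoidAlgebra K G)).flip c0
  have hsL : ∀ a : A, sL a = a ⊗ₜ c0 := fun a => rfl
  -- t_L as a linear map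
  let tL : A →ₗ[K] A ⊗[K] (Aᵐᵒᵖ ⊗[K] MonoidAlgebra K G) :=
    (TensorProduct.mk K A (Aᵐᵒᵖ ⊗[K] MonoidAlgebra K G) 1).comp
      (((TensorProduct.mk K Aᵐᵒᵖ (MonoidAlgebra K G)).flip (MonoidAlgebra.of K G 1)).comp
        (opLinearEquiv K : A ≃ₗ[K] Aᵐᵒᵖ).toLinearMap)
  have htL : ∀ a : A, tL a = (1:A) ⊗ₜ (op a ⊗ₜ MonoidAlgebra.of K G 1) := fun a => rfl
  refine ⟨?_, ?_, ?_, ?_⟩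
  · rw [hε]; simp
  · intro ξ η
    have key : mul.compr₂ ε = (mul.compl₂ (sL.comp ε)).compr₂ ε := by
      refine ext3 fun a b σ => ?_
      refine ext3 fun c d τ => ?_
      simp only [LinearMap.compr₂_apply, LinearMap.compl₂_apply, LinearMap.comp_apply,
        hsL, hc0, hε, hmul]
      simp [smul_mul', mul_smul, smul_inv_smul, mul_assoc]
    simpa [hsL, hc0] using DFunLike.congr_fun (LinearMap.congr_fun key ξ) η
  · intro ξ η
    have key : mul.compr₂ ε = (mul.compl₂ (tL.comp ε)).compr₂ ε := by
      refine ext3 fun a b σ => ?_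
      refine ext3 fun c d τ => ?_
      simp only [LinearMap.compr₂_apply, LinearMap.compl₂_apply, LinearMap.comp_apply,
        htL, hε, hmul]
      simp [smul_mul', mul_smul, smul_inv_smul, mul_assoc]
    simpa [htL] using DFunLike.congr_fun (LinearMap.congr_fun key ξ) η
  · intro x y ξ
    have key : ε.comp (mul (mul (x ⊗ₜ (op (1:A) ⊗ₜ MonoidAlgebra.of K G 1))
          ((1:A) ⊗ₜ (op y ⊗ₜ MonoidAlgebra.of K G 1)))) =
        (LinearMap.mulRight K y).comp ((LinearMap.mulLeft K x).comp ε) := by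
      refine ext3 fun a b σ => ?_
      simp only [LinearMap.comp_apply, hmul, hε, LinearMap.mulLeft_apply,
        LinearMap.mulRight_apply]
      simp [smul_mul', mul_smul, smul_inv_smul, mul_assoc]
    exact LinearMap.congr_fun key ξ
end

section
/- Let B be a K-algebra, let α : A → B be a K-algebra homomorphism, let β : A^op → B be a K-algebra homomorphism, and let g : G → Bˣ be a group homomorphism into the units of B, such that for all a, b ∈ A and σ ∈ G: g(σ) α(a) = α(σ(a)) g(σ), g(σ) β(ā) = β(σ(a)‾) g(σ), and α(a) β(b̄) = β(b̄) α(a). Then there exists a unique K-algebra homomorphism F : A^e ⋈ G → B satisfying F(a ⊗ b̄ ⋈ σ) = α(a) g(σ) β(b̄) for all a, b ∈ A, σ ∈ G. -/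
open TensorProduct MulOpposite

/-- **universal property of `A^e ⋈ G`.**  Let `A^e ⋈ G` be the `K`-module
`A ⊗[K] Aᵐᵒᵖ ⊗[K] K[G]` with the unital associative multiplication determined on pure tensors
by `(a ⊗ b̄ ⋈ σ)(c ⊗ d̄ ⋈ τ) = a σ(c) ⊗ (d τ⁻¹(b))‾ ⋈ στ` and unit `1 ⊗ 1̄ ⋈ e`.  Given a
`K`-algebra `B`, algebra homomorphisms `α : A → B`, `β : Aᵐᵒᵖ → B` and a group homomorphism
`g : G → Bˣ` such that `g(σ) α(a) = α(σ a) g(σ)`, `g(σ) β(ā) = β(σ(a)‾) g(σ)` and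
`α(a) β(b̄) = β(b̄) α(a)`, there is a unique `K`-algebra homomorphism `F : A^e ⋈ G → B`
with `F(a ⊗ b̄ ⋈ σ) = α(a) g(σ) β(b̄)`. -/
theorem stmt11 (K A G B : Type*) [CommRing K] [Ring A] [Algebra K A]
    [Group G] [MulSemiringAction G A] [SMulCommClass G K A]
    [Ring B] [Algebra K B]
    (mul : (A ⊗[K] (Aᵐᵒᵖ ⊗[K] MonoidAlgebra K G)) →ₗ[K]
        (A ⊗[K] (Aᵐᵒᵖ ⊗[K] MonoidAlgebra K G)) →ₗ[K] (A ⊗[K] (Aᵐᵒᵖ ⊗[K] MonoidAlgebra K G)))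
    (hmul : ∀ (a b c d : A) (σ τ : G),
        mul (a ⊗ₜ (op b ⊗ₜ MonoidAlgebra.of K G σ)) (c ⊗ₜ (op d ⊗ₜ MonoidAlgebra.of K G τ)) =
          (a * σ • c) ⊗ₜ (op (d * τ⁻¹ • b) ⊗ₜ MonoidAlgebra.of K G (σ * τ)))
    (hassoc : ∀ x y z, mul (mul x y) z = mul x (mul y z))
    (hone : ∀ x, mul ((1:A) ⊗ₜ (op (1:A) ⊗ₜ MonoidAlgebra.of K G 1)) x = x ∧
        mul x ((1:A) ⊗ₜ (op (1:A) ⊗ₜ MonoidAlgebra.of K G 1)) = x)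
    (α : A →ₐ[K] B) (β : Aᵐᵒᵖ →ₐ[K] B) (g : G →* Bˣ)
    (hgα : ∀ (σ : G) (a : A), (g σ : B) * α a = α (σ • a) * (g σ : B))
    (hgβ : ∀ (σ : G) (a : A), (g σ : B) * β (op a) = β (op (σ • a)) * (g σ : B))
    (hαβ : ∀ (a b : A), α a * β (op b) = β (op b) * α a) :
    ∃! F : (A ⊗[K] (Aᵐᵒᵖ ⊗[K] MonoidAlgebra K G)) →ₗ[K] B,
      F ((1:A) ⊗ₜ (op (1:A) ⊗ₜ MonoidAlgebra.of K G 1)) = 1 ∧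
      (∀ ξ η, F (mul ξ η) = F ξ * F η) ∧
      (∀ (a b : A) (σ : G),
        F (a ⊗ₜ (op b ⊗ₜ MonoidAlgebra.of K G σ)) = α a * (g σ : B) * β (op b)) := by
  classical
  set φ : MonoidAlgebra K G →ₐ[K] B := MonoidAlgebra.lift K B G ((Units.coeHom B).comp g) with hφ
  have hφof : ∀ σ : G, φ (MonoidAlgebra.of K G σ) = (g σ : B) := fun σ => by
    simp [hφ]
  let inner : Aᵐᵒᵖ ⊗[K] MonoidAlgebra K G →ₗ[K] B :=
    TensorProduct.lift (LinearMap.mk₂ K (fun b x => φ x * β b)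
      (fun b₁ b₂ x => by simp [mul_add])
      (fun k b x => by simp [mul_smul_comm])
      (fun b x₁ x₂ => by simp [add_mul])
      (fun k b x => by simp [smul_mul_assoc]))
  let F : (A ⊗[K] (Aᵐᵒᵖ ⊗[K] MonoidAlgebra K G)) →ₗ[K] B :=
    TensorProduct.lift (LinearMap.mk₂ K (fun a y => α a * inner y)
      (fun a₁ a₂ y => by simp [add_mul])
      (fun k a y => by simp [smul_mul_assoc])
      (fun a y₁ y₂ => by simp [mul_add])
      (fun k a y => by simp [mul_smul_comm]))
  have hF : ∀ (a b : A) (σ : G),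
      F (a ⊗ₜ (op b ⊗ₜ MonoidAlgebra.of K G σ)) = α a * (g σ : B) * β (op b) := by
    intro a b σ
    show α a * (φ (MonoidAlgebra.of K G σ) * β (op b)) = _
    rw [hφof, mul_assoc]
  set S : Set (A ⊗[K] (Aᵐᵒᵖ ⊗[K] MonoidAlgebra K G)) :=
    {x | ∃ (a b : A) (σ : G), x = a ⊗ₜ (op b ⊗ₜ MonoidAlgebra.of K G σ)} with hS
  have hspan : Submodule.span K S = ⊤ := by
    rw [eq_top_iff]
    rintro x -
    induction x using TensorProduct.induction_on with
    | zero => exact zero_mem _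
    | tmul a t =>
      induction t using TensorProduct.induction_on with
      | zero => rw [tmul_zero]; exact zero_mem _
      | tmul b x =>
        rw [← op_unop b]
        induction x using MonoidAlgebra.induction_on with
        | of σ => exact Submodule.subset_span ⟨a, unop b, σ, rfl⟩
        | add x y hx hy => rw [tmul_add, tmul_add]; exact add_mem hx hy
        | smul k x hx => rw [tmul_smul, tmul_smul]; exact Submodule.smul_mem _ _ hx
      | add t₁ t₂ h₁ h₂ => rw [tmul_add]; exact add_mem h₁ h₂
    | add x y hx hy => exact add_mem hx hy
  have key : ∀ (a b c d : A) (σ τ : G),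
      α (a * σ • c) * (g (σ * τ) : B) * β (op (d * τ⁻¹ • b)) =
        (α a * (g σ : B) * β (op b)) * (α c * (g τ : B) * β (op d)) := by
    intro a b c d σ τ
    have h1 : β (op b) * (g τ : B) = (g τ : B) * β (op (τ⁻¹ • b)) := by
      rw [hgβ, smul_inv_smul]
    have swap1 : ∀ z : B, β (op b) * (α c * z) = α c * (β (op b) * z) := fun z => by
      rw [← mul_assoc, ← hαβ, mul_assoc]
    have swap2 : ∀ z : B, (g σ : B) * (α c * z) = α (σ • c) * ((g σ : B) * z) := fun z => by
      rw [← mul_assoc, hgα, mul_assoc]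
    have swap3 : ∀ z : B, β (op b) * ((g τ : B) * z) = (g τ : B) * (β (op (τ⁻¹ • b)) * z) :=
      fun z => by rw [← mul_assoc, h1, mul_assoc]
    rw [op_mul, map_mul β, map_mul α, map_mul g, Units.val_mul]
    simp only [mul_assoc]
    rw [swap1, swap2, swap3]
  have hFmulS : ∀ ξ ∈ S, ∀ η ∈ S, F (mul ξ η) = F ξ * F η := by
    rintro _ ⟨a, b, σ, rfl⟩ _ ⟨c, d, τ, rfl⟩
    rw [hmul, hF, hF, hF, key]
  have hFmul1 : ∀ ξ ∈ S, ∀ η, F (mul ξ η) = F ξ * F η := by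
    intro ξ hξ η
    have hη : η ∈ Submodule.span K S := hspan ▸ Submodule.mem_top
    induction hη using Submodule.span_induction with
    | mem x hx => exact hFmulS ξ hξ x hx
    | zero => rw [(mul ξ).map_zero, F.map_zero, mul_zero]
    | add x y _ _ hx hy => rw [map_add, map_add, map_add, mul_add, hx, hy]
    | smul k x _ hx => rw [map_smul, map_smul, map_smul, mul_smul_comm, hx]
  have hFmul : ∀ ξ η, F (mul ξ η) = F ξ * F η := by
    intro ξ η
    have hξ : ξ ∈ Submodule.span K S := hspan ▸ Submodule.mem_top
    induction hξ using Submodule.span_induction with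
    | mem x hx => exact hFmul1 x hx η
    | zero =>
      rw [mul.map_zero, LinearMap.zero_apply, F.map_zero, zero_mul]
    | add x y _ _ hx hy =>
      rw [map_add, LinearMap.add_apply, map_add, map_add, add_mul, hx, hy]
    | smul k x _ hx =>
      rw [map_smul, LinearMap.smul_apply, map_smul, map_smul, smul_mul_assoc, hx]
  refine ⟨F, ⟨?_, hFmul, hF⟩, ?_⟩
  · rw [hF]; simp
  · rintro F' ⟨-, -, hF'⟩
    apply LinearMap.ext_on hspan
    rintro _ ⟨a, b, σ, rfl⟩
    rw [hF', hF]
end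

section
/- Let B be a K-subalgebra of A, let G be a group of K-algebra automorphisms of A each of which fixes B pointwise, and let R = C_A(B) be the centralizer of B in A. Then each σ ∈ G maps R onto R (so G acts on R by K-algebra automorphisms, and the K-algebra R^e ⋈ G is defined), and the K-linear map Ψ : R^e ⋈ G → End(_B A _B) determined on pure tensors by Ψ(r ⊗ s̄ ⋈ σ)(x) = r · σ(x s) (for x ∈ A) is well defined (each Ψ(r ⊗ s̄ ⋈ σ) is a B-B-bimodule endomorphism of A) and is a homomorphism of unital K-algebras. -/
open TensorProduct MulOpposite

set_option maxHeartbeats 1000000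
set_option synthInstance.maxHeartbeats 400000

/-- Let `B` be a `K`-subalgebra of `A`, let `G` be a group of `K`-algebra
automorphisms of `A` fixing `B` pointwise, and let `R = C_A(B)` be the centralizer of `B` in
`A`.  Then every `σ ∈ G` maps `R` onto `R` (so `G` acts on `R` and the `K`-algebra `R^e ⋈ G`
is defined, with multiplication `(r ⊗ s̄ ⋈ σ)(u ⊗ v̄ ⋈ τ) = r σ(u) ⊗ (v τ⁻¹(s))‾ ⋈ στ` and
unit `1 ⊗ 1̄ ⋈ e`), and the `K`-linear map `Ψ : R^e ⋈ G → End(_B A _B)` determined by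
`Ψ(r ⊗ s̄ ⋈ σ)(x) = r σ(x s)` is well defined (each value is a `B`-`B`-bimodule endomorphism
of `A`) and is a homomorphism of unital `K`-algebras. -/
theorem stmt16 (K A : Type*) [CommRing K] [Ring A] [Algebra K A]
    (B : Subalgebra K A) (G : Subgroup (A ≃ₐ[K] A))
    (hG : ∀ σ ∈ G, ∀ b ∈ B, σ b = b) :
    (∀ σ : A ≃ₐ[K] A, σ ∈ G →
      ⇑σ '' (Subalgebra.centralizer K (B : Set A) : Set A)
        = (Subalgebra.centralizer K (B : Set A) : Set A)) ∧
    (∀ (mul : ((Subalgebra.centralizer K (B : Set A)) ⊗[K]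
          ((Subalgebra.centralizer K (B : Set A))ᵐᵒᵖ ⊗[K] MonoidAlgebra K G)) →ₗ[K]
        ((Subalgebra.centralizer K (B : Set A)) ⊗[K]
          ((Subalgebra.centralizer K (B : Set A))ᵐᵒᵖ ⊗[K] MonoidAlgebra K G)) →ₗ[K]
        ((Subalgebra.centralizer K (B : Set A)) ⊗[K]
          ((Subalgebra.centralizer K (B : Set A))ᵐᵒᵖ ⊗[K] MonoidAlgebra K G))),
      (∀ (r s u v r' v' : Subalgebra.centralizer K (B : Set A)) (σ τ : G),
          (r' : A) = (r : A) * (σ : A ≃ₐ[K] A) (u : A) →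
          (v' : A) = (v : A) * ((τ⁻¹ : G) : A ≃ₐ[K] A) (s : A) →
          mul (r ⊗ₜ (op s ⊗ₜ MonoidAlgebra.of K G σ))
              (u ⊗ₜ (op v ⊗ₜ MonoidAlgebra.of K G τ)) =
            r' ⊗ₜ (op v' ⊗ₜ MonoidAlgebra.of K G (σ * τ))) →
      ∀ (Ψ : ((Subalgebra.centralizer K (B : Set A)) ⊗[K]
          ((Subalgebra.centralizer K (B : Set A))ᵐᵒᵖ ⊗[K] MonoidAlgebra K G)) →ₗ[K]
          Module.End K A),
        (∀ (r s : Subalgebra.centralizer K (B : Set A)) (σ : G) (x : A),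
            Ψ (r ⊗ₜ (op s ⊗ₜ MonoidAlgebra.of K G σ)) x =
              (r : A) * (σ : A ≃ₐ[K] A) (x * (s : A))) →
        (∀ ξ (b : A), b ∈ B → ∀ x : A,
            Ψ ξ (b * x) = b * Ψ ξ x ∧ Ψ ξ (x * b) = Ψ ξ x * b) ∧
        Ψ ((1 : Subalgebra.centralizer K (B : Set A)) ⊗ₜ
            (op (1 : Subalgebra.centralizer K (B : Set A)) ⊗ₜ MonoidAlgebra.of K G 1)) = 1 ∧
        (∀ ξ η, Ψ (mul ξ η) = Ψ ξ * Ψ η)) := by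
  have key : ∀ σ : A ≃ₐ[K] A, σ ∈ G → ∀ r ∈ Subalgebra.centralizer K (B : Set A),
      σ r ∈ Subalgebra.centralizer K (B : Set A) := by
    intro σ hσ r hr
    rw [Subalgebra.mem_centralizer_iff]
    intro b hb
    have hb' : σ b = b := hG σ hσ b hb
    calc b * σ r = σ b * σ r := by rw [hb']
      _ = σ (b * r) := (map_mul σ b r).symm
      _ = σ (r * b) := by rw [(Subalgebra.mem_centralizer_iff K).mp hr b hb]
      _ = σ r * σ b := map_mul σ r b
      _ = σ r * b := by rw [hb']
  constructor
  · intro σ hσ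
    ext x
    constructor
    · rintro ⟨r, hr, rfl⟩
      exact key σ hσ r hr
    · intro hx
      refine ⟨σ⁻¹ x, key σ⁻¹ (G.inv_mem hσ) x hx, ?_⟩
      exact σ.apply_symm_apply x
  intro mul hmul Ψ hΨ
  refine ⟨?_, ?_, ?_⟩
  · intro ξ b hb
    induction ξ using TensorProduct.induction_on with
    | zero => intro x; rw [map_zero]; simp
    | add y z hy hz =>
      intro x
      constructor
      · rw [map_add, LinearMap.add_apply, LinearMap.add_apply, (hy x).1, (hz x).1, mul_add]
      · rw [map_add, LinearMap.add_apply, LinearMap.add_apply, (hy x).2, (hz x).2, add_mul]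
    | tmul r t =>
      induction t using TensorProduct.induction_on with
      | zero => intro x; rw [TensorProduct.tmul_zero, map_zero]; simp
      | add y z hy hz =>
        intro x
        constructor
        · rw [TensorProduct.tmul_add, map_add, LinearMap.add_apply, LinearMap.add_apply,
            (hy x).1, (hz x).1, mul_add]
        · rw [TensorProduct.tmul_add, map_add, LinearMap.add_apply, LinearMap.add_apply,
            (hy x).2, (hz x).2, add_mul]
      | tmul s f =>
        induction s using MulOpposite.rec' with
        | h s =>
        induction f using MonoidAlgebra.induction_on with
        | add f g hf hg =>
          intro x
          constructor
          · rw [TensorProduct.tmul_add, TensorProduct.tmul_add, map_add, LinearMap.add_apply,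
              LinearMap.add_apply, (hf x).1, (hg x).1, mul_add]
          · rw [TensorProduct.tmul_add, TensorProduct.tmul_add, map_add, LinearMap.add_apply,
              LinearMap.add_apply, (hf x).2, (hg x).2, add_mul]
        | smul k f hf =>
          intro x
          constructor
          · rw [TensorProduct.tmul_smul, TensorProduct.tmul_smul, map_smul,
              LinearMap.smul_apply, LinearMap.smul_apply, (hf x).1, mul_smul_comm]
          · rw [TensorProduct.tmul_smul, TensorProduct.tmul_smul, map_smul,
              LinearMap.smul_apply, LinearMap.smul_apply, (hf x).2, smul_mul_assoc]
        | of σ =>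
          intro x
          have hbσ : (σ : A ≃ₐ[K] A) b = b := hG σ σ.2 b hb
          have hs : b * (s : A) = (s : A) * b :=
            (Subalgebra.mem_centralizer_iff K).mp s.2 b hb
          have hr' : b * (r : A) = (r : A) * b :=
            (Subalgebra.mem_centralizer_iff K).mp r.2 b hb
          constructor
          · rw [hΨ, hΨ, mul_assoc b x, map_mul, hbσ, ← mul_assoc (r : A) b, ← hr', mul_assoc]
          · rw [hΨ, hΨ, mul_assoc x b, hs, ← mul_assoc x, map_mul, hbσ, ← mul_assoc]
  · apply LinearMap.ext
    intro x
    rw [hΨ]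
    simp
  · have pure : ∀ (r s u v : Subalgebra.centralizer K (B : Set A)) (σ τ : G),
        Ψ (mul (r ⊗ₜ (op s ⊗ₜ MonoidAlgebra.of K G σ)) (u ⊗ₜ (op v ⊗ₜ MonoidAlgebra.of K G τ)))
          = Ψ (r ⊗ₜ (op s ⊗ₜ MonoidAlgebra.of K G σ))
            * Ψ (u ⊗ₜ (op v ⊗ₜ MonoidAlgebra.of K G τ)) := by
      intro r s u v σ τ
      have hu : (σ : A ≃ₐ[K] A) (u : A) ∈ Subalgebra.centralizer K (B : Set A) :=
        key σ σ.2 u u.2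
      have hs : ((τ⁻¹ : G) : A ≃ₐ[K] A) (s : A) ∈ Subalgebra.centralizer K (B : Set A) :=
        key _ (τ⁻¹).2 s s.2
      rw [hmul r s u v ⟨(r : A) * (σ : A ≃ₐ[K] A) (u : A), mul_mem r.2 hu⟩
        ⟨(v : A) * ((τ⁻¹ : G) : A ≃ₐ[K] A) (s : A), mul_mem v.2 hs⟩ σ τ rfl rfl]
      apply LinearMap.ext
      intro x
      rw [Module.End.mul_apply, hΨ, hΨ, hΨ]
      have hinv : ((τ⁻¹ : G) : A ≃ₐ[K] A) = ((τ : A ≃ₐ[K] A)).symm := rfl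
      show (r : A) * (σ : A ≃ₐ[K] A) (u : A)
          * ((σ * τ : G) : A ≃ₐ[K] A) (x * ((v : A) * ((τ⁻¹ : G) : A ≃ₐ[K] A) (s : A)))
        = (r : A) * (σ : A ≃ₐ[K] A)
            ((u : A) * (τ : A ≃ₐ[K] A) (x * (v : A)) * (s : A))
      have hcoe : ∀ y : A, ((σ * τ : G) : A ≃ₐ[K] A) y
          = (σ : A ≃ₐ[K] A) ((τ : A ≃ₐ[K] A) y) := fun y => rfl
      rw [hcoe, hinv, ← mul_assoc x, map_mul (τ : A ≃ₐ[K] A), AlgEquiv.apply_symm_apply]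
      simp only [map_mul, mul_assoc]
    intro ξ η
    induction ξ using TensorProduct.induction_on with
    | zero =>
      simp only [map_zero, LinearMap.zero_apply, zero_mul]
    | add y z hy hz =>
      rw [map_add, LinearMap.add_apply, map_add, map_add, hy, hz, add_mul]
    | tmul r t =>
      induction t using TensorProduct.induction_on with
      | zero =>
        simp only [TensorProduct.tmul_zero, map_zero, LinearMap.zero_apply, zero_mul]
      | add y z hy hz =>
        rw [TensorProduct.tmul_add, map_add, LinearMap.add_apply, map_add, map_add, hy, hz,
          add_mul]
      | tmul s f =>
        induction s using MulOpposite.rec' with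
        | h s =>
        induction f using MonoidAlgebra.induction_on with
        | add f g hf hg =>
          rw [TensorProduct.tmul_add, TensorProduct.tmul_add, map_add, LinearMap.add_apply,
            map_add, map_add, hf, hg, add_mul]
        | smul k f hf =>
          rw [TensorProduct.tmul_smul, TensorProduct.tmul_smul, map_smul,
            LinearMap.smul_apply, map_smul, map_smul, hf, smul_mul_assoc]
        | of σ =>
          induction η using TensorProduct.induction_on with
          | zero =>
            simp only [map_zero, mul_zero]
          | add y z hy hz =>
            rw [map_add, map_add, map_add, hy, hz, mul_add]
          | tmul u t' =>
            induction t' using TensorProduct.induction_on with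
            | zero =>
              simp only [TensorProduct.tmul_zero, map_zero, mul_zero]
            | add y z hy hz =>
              rw [TensorProduct.tmul_add, map_add, map_add, map_add, hy, hz, mul_add]
            | tmul v g =>
              induction v using MulOpposite.rec' with
              | h v =>
              induction g using MonoidAlgebra.induction_on with
              | add f g hf hg =>
                rw [TensorProduct.tmul_add, TensorProduct.tmul_add, map_add, map_add,
                  map_add, hf, hg, mul_add]
              | smul k f hf =>
                rw [TensorProduct.tmul_smul, TensorProduct.tmul_smul, map_smul, map_smul,
                  map_smul, hf, mul_smul_comm]
              | of τ =>
                exact pure r s u v σ τ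
end

section
/- The K-bilinear multiplication determined on pure tensors by (a ⊙ σ ⊙ b)(c ⊙ τ ⊙ d) = a σ(c) ⊙ στ ⊙ σ(d) b is well defined, associative, and has unit element 1 ⊙ e ⊙ 1, endowing the K-module A ⊗[K] K[G] ⊗[K] A with the structure of a unital associative K-algebra A ⊙ K[G] ⊙ A; moreover the K-linear map Φ : A ⊙ K[G] ⊙ A → End_K(A) determined by Φ(a ⊙ σ ⊙ b)(x) = a σ(x) b is a homomorphism of unital K-algebras (the Xu anchor map of the Connes–Moscovici algebra). -/
open TensorProduct


section Aux
variable (K A G : Type*) [CommRing K] [Ring A] [Algebra K A]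
    [Group G] [MulSemiringAction G A] [SMulCommClass G K A]

local notation "M" => A ⊗[K] (MonoidAlgebra K G ⊗[K] A)

noncomputable def cmRho (σ : G) : A →ₗ[K] A := DistribMulAction.toLinearMap K A σ

noncomputable def cmP (σ : G) : A →ₗ[K] A →ₗ[K] (M →ₗ[K] M) :=
  LinearMap.mk₂ K
    (fun a b => TensorProduct.map ((LinearMap.mulLeft K a).comp (cmRho K A G σ))
      (TensorProduct.map (LinearMap.mulLeft K (MonoidAlgebra.of K G σ))
        ((LinearMap.mulRight K b).comp (cmRho K A G σ))))
    (by
      intro a a' b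
      have : (LinearMap.mulLeft K (a + a')).comp (cmRho K A G σ) =
          (LinearMap.mulLeft K a).comp (cmRho K A G σ) +
          (LinearMap.mulLeft K a').comp (cmRho K A G σ) := by
        ext x; simp [add_mul]
      simp only [this, TensorProduct.map_add_left])
    (by
      intro k a b
      have : (LinearMap.mulLeft K (k • a)).comp (cmRho K A G σ) =
          k • ((LinearMap.mulLeft K a).comp (cmRho K A G σ)) := by
        ext x; simp [smul_mul_assoc]
      simp only [this, TensorProduct.map_smul_left])
    (by
      intro a b b'
      have : (LinearMap.mulRight K (b + b')).comp (cmRho K A G σ) =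
          (LinearMap.mulRight K b).comp (cmRho K A G σ) +
          (LinearMap.mulRight K b').comp (cmRho K A G σ) := by
        ext x; simp [mul_add]
      simp only [this, TensorProduct.map_add_right])
    (by
      intro k a b
      have : (LinearMap.mulRight K (k • b)).comp (cmRho K A G σ) =
          k • ((LinearMap.mulRight K b).comp (cmRho K A G σ)) := by
        ext x; simp [mul_smul_comm]
      simp only [this, TensorProduct.map_smul_right])

noncomputable def cmQ : MonoidAlgebra K G →ₗ[K] A →ₗ[K] A →ₗ[K] (M →ₗ[K] M) :=
  (Finsupp.lsum K (fun σ => LinearMap.toSpanSingleton K _ (cmP K A G σ))).comp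
    (MonoidAlgebra.coeffLinearEquiv K).toLinearMap

noncomputable def cmMul : M →ₗ[K] M →ₗ[K] M :=
  TensorProduct.lift <|
    (TensorProduct.lift.equiv (RingHom.id K) (MonoidAlgebra K G) A (M →ₗ[K] M)).toLinearMap.comp
      (cmQ K A G).flip

lemma cmMul_gen (a b : A) (σ : G) :
    cmMul K A G (a ⊗ₜ (MonoidAlgebra.of K G σ ⊗ₜ b)) = cmP K A G σ a b := by
  simp only [cmMul, cmQ, MonoidAlgebra.of_apply, TensorProduct.lift.tmul,
    LinearMap.coe_comp, Function.comp_apply, LinearEquiv.coe_coe,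
    TensorProduct.lift.equiv_apply, LinearMap.flip_apply,
    MonoidAlgebra.coeffLinearEquiv_apply, MonoidAlgebra.coeff_single]
  erw [Finsupp.lsum_single]
  simp [LinearMap.toSpanSingleton_apply]

lemma cmMul_apply (a b c d : A) (σ τ : G) :
    cmMul K A G (a ⊗ₜ (MonoidAlgebra.of K G σ ⊗ₜ b)) (c ⊗ₜ (MonoidAlgebra.of K G τ ⊗ₜ d)) =
      (a * σ • c) ⊗ₜ (MonoidAlgebra.of K G (σ * τ) ⊗ₜ (σ • d * b)) := by
  rw [cmMul_gen]
  simp [cmP, cmRho]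
  rfl

lemma cmMul_single (a b c d : A) (σ τ : G) :
    cmMul K A G (a ⊗ₜ (MonoidAlgebra.single σ (1:K) ⊗ₜ b))
        (c ⊗ₜ (MonoidAlgebra.single τ (1:K) ⊗ₜ d)) =
      (a * σ • c) ⊗ₜ (MonoidAlgebra.single (σ * τ) (1:K) ⊗ₜ (σ • d * b)) :=
  cmMul_apply K A G a b c d σ τ

lemma cmSpan : Submodule.span K
    {x : M | ∃ a σ b, x = a ⊗ₜ (MonoidAlgebra.of K G σ ⊗ₜ b)} = ⊤ := by
  rw [eq_top_iff]
  rintro x -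
  induction x using TensorProduct.induction_on with
  | zero => exact zero_mem _
  | add u v hu hv => exact add_mem hu hv
  | tmul a y =>
    induction y using TensorProduct.induction_on with
    | zero => simpa using zero_mem (α := M) _
    | add u v hu hv => rw [tmul_add]; exact add_mem hu hv
    | tmul u b =>
      induction u using MonoidAlgebra.induction with
      | zero => simpa using zero_mem (α := M) _
      | single_add σ k f _ _ ih =>
        rw [add_tmul, tmul_add]
        refine add_mem ?_ ih
        have h1 : (MonoidAlgebra.single σ k : MonoidAlgebra K G) = k • MonoidAlgebra.of K G σ := by
          simp [MonoidAlgebra.of_apply, MonoidAlgebra.smul_single]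
        have : (a ⊗ₜ (MonoidAlgebra.single σ k ⊗ₜ b) : M) =
            k • (a ⊗ₜ (MonoidAlgebra.of K G σ ⊗ₜ b)) := by
          rw [h1, ← TensorProduct.smul_tmul', TensorProduct.tmul_smul]
        rw [this]
        exact Submodule.smul_mem _ _ (Submodule.subset_span ⟨a, σ, b, rfl⟩)
end Aux

section Aux2
variable (K A G : Type*) [CommRing K] [Ring A] [Algebra K A]
    [Group G] [MulSemiringAction G A] [SMulCommClass G K A]

local notation "M" => A ⊗[K] (MonoidAlgebra K G ⊗[K] A)

lemma cmExt {N : Type*} [AddCommMonoid N] [Module K N] {f g : M →ₗ[K] N}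
    (h : ∀ (a : A) (σ : G) (b : A),
      f (a ⊗ₜ (MonoidAlgebra.of K G σ ⊗ₜ b)) = g (a ⊗ₜ (MonoidAlgebra.of K G σ ⊗ₜ b))) :
    f = g :=
  LinearMap.ext_on (cmSpan K A G) (by rintro x ⟨a, σ, b, rfl⟩; exact h a σ b)

end Aux2


/-- For a commutative ring `K`, a `K`-algebra `A` and a group `G` acting on
`A` by `K`-algebra automorphisms, the `K`-bilinear multiplication determined on pure tensors of
`A ⊗[K] K[G] ⊗[K] A` by `(a ⊙ σ ⊙ b)(c ⊙ τ ⊙ d) = a σ(c) ⊙ στ ⊙ σ(d) b` is well defined,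
associative and unital with unit `1 ⊙ e ⊙ 1` (the Connes–Moscovici algebra `A ⊙ K[G] ⊙ A`);
moreover the `K`-linear Xu anchor map `Φ : A ⊙ K[G] ⊙ A → End_K(A)` determined by
`Φ(a ⊙ σ ⊙ b)(x) = a σ(x) b` is a homomorphism of unital `K`-algebras. -/
theorem stmt17 (K A G : Type*) [CommRing K] [Ring A] [Algebra K A]
    [Group G] [MulSemiringAction G A] [SMulCommClass G K A] :
    ∃ mul : (A ⊗[K] (MonoidAlgebra K G ⊗[K] A)) →ₗ[K]
        (A ⊗[K] (MonoidAlgebra K G ⊗[K] A)) →ₗ[K] (A ⊗[K] (MonoidAlgebra K G ⊗[K] A)),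
      (∀ (a b c d : A) (σ τ : G),
        mul (a ⊗ₜ (MonoidAlgebra.of K G σ ⊗ₜ b)) (c ⊗ₜ (MonoidAlgebra.of K G τ ⊗ₜ d)) =
          (a * σ • c) ⊗ₜ (MonoidAlgebra.of K G (σ * τ) ⊗ₜ (σ • d * b))) ∧
      (∀ x y z, mul (mul x y) z = mul x (mul y z)) ∧
      (∀ x, mul ((1:A) ⊗ₜ (MonoidAlgebra.of K G 1 ⊗ₜ (1:A))) x = x) ∧
      (∀ x, mul x ((1:A) ⊗ₜ (MonoidAlgebra.of K G 1 ⊗ₜ (1:A))) = x) ∧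
      (∀ Φ : (A ⊗[K] (MonoidAlgebra K G ⊗[K] A)) →ₗ[K] Module.End K A,
        (∀ (a b : A) (σ : G) (x : A),
          Φ (a ⊗ₜ (MonoidAlgebra.of K G σ ⊗ₜ b)) x = a * σ • x * b) →
        Φ ((1:A) ⊗ₜ (MonoidAlgebra.of K G 1 ⊗ₜ (1:A))) = 1 ∧
        ∀ ξ η, Φ (mul ξ η) = Φ ξ * Φ η) := by
  refine ⟨cmMul K A G, fun a b c d σ τ => cmMul_apply K A G a b c d σ τ, ?_, ?_, ?_, ?_⟩
  · -- associativity
    have B12 : (LinearMap.llcomp K (A ⊗[K] (MonoidAlgebra K G ⊗[K] A)) (A ⊗[K] (MonoidAlgebra K G ⊗[K] A)) ((A ⊗[K] (MonoidAlgebra K G ⊗[K] A)) →ₗ[K] (A ⊗[K] (MonoidAlgebra K G ⊗[K] A))) (cmMul K A G)).comp (cmMul K A G) =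
        (LinearMap.lcomp K ((A ⊗[K] (MonoidAlgebra K G ⊗[K] A)) →ₗ[K] (A ⊗[K] (MonoidAlgebra K G ⊗[K] A))) (cmMul K A G)).comp
          ((LinearMap.llcomp K (A ⊗[K] (MonoidAlgebra K G ⊗[K] A)) (A ⊗[K] (MonoidAlgebra K G ⊗[K] A)) (A ⊗[K] (MonoidAlgebra K G ⊗[K] A))).comp (cmMul K A G)) := by
      apply cmExt; intro a σ b
      apply cmExt; intro c τ d
      apply cmExt; intro e υ f
      simp only [LinearMap.comp_apply, LinearMap.llcomp_apply, LinearMap.lcomp_apply,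
        cmMul_apply, cmMul_single]
      simp [smul_mul', mul_smul, mul_assoc]
    intro x y z
    have h := LinearMap.congr_fun (LinearMap.congr_fun (LinearMap.congr_fun B12 x) y) z
    simpa only [LinearMap.comp_apply, LinearMap.llcomp_apply, LinearMap.lcomp_apply] using h
  · -- left unit
    have h : cmMul K A G ((1:A) ⊗ₜ (MonoidAlgebra.of K G 1 ⊗ₜ (1:A))) = LinearMap.id := by
      apply cmExt; intro a σ b
      simp [cmMul_single]
    intro x; exact LinearMap.congr_fun h x
  · -- right unit
    have h : (cmMul K A G).flip ((1:A) ⊗ₜ (MonoidAlgebra.of K G 1 ⊗ₜ (1:A))) = LinearMap.id := by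
      apply cmExt; intro a σ b
      simp [LinearMap.flip_apply, cmMul_single]
    intro x; exact LinearMap.congr_fun h x
  · -- anchor
    intro Φ hΦ
    constructor
    · ext x
      simpa using hΦ 1 1 1 x
    · have hPhi' : ∀ (a b : A) (σ : G) (x : A),
          Φ (a ⊗ₜ (MonoidAlgebra.single σ (1:K) ⊗ₜ b)) x = a * σ • x * b := hΦ
      have LR : (LinearMap.llcomp K (A ⊗[K] (MonoidAlgebra K G ⊗[K] A)) (A ⊗[K] (MonoidAlgebra K G ⊗[K] A)) (Module.End K A) Φ).comp (cmMul K A G) =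
          (LinearMap.lcomp K (Module.End K A) Φ).comp
            ((LinearMap.mul K (Module.End K A)).comp Φ) := by
        apply cmExt; intro a σ b
        apply cmExt; intro c τ d
        simp only [LinearMap.comp_apply, LinearMap.llcomp_apply, LinearMap.lcomp_apply,
          LinearMap.mul_apply', cmMul_apply, cmMul_single]
        ext x
        simp only [Module.End.mul_apply, hPhi', hΦ]
        simp [smul_mul', mul_smul, mul_assoc]
      intro ξ η
      have h := LinearMap.congr_fun (LinearMap.congr_fun LR ξ) η
      simpa only [LinearMap.comp_apply, LinearMap.llcomp_apply, LinearMap.lcomp_apply,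
        LinearMap.mul_apply'] using h
end
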